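/- arXiv:2206.00594 — 7 statements merged into one kernel-verified Lean document; each statement's English description precedes it below -/
import Mathlib

section
/- For every integer k ≥ 1, the graph G_k is O_2-free, does not contain K_{2,3} as a subgraph, and has a feedback vertex set of size at most k − 1. -/
open SimpleGraph

noncomputable def degN {V : Type} (G : SimpleGraph V) (v : V) : ℕ :=
  Nat.card (G.neighborSet v)

def HasIndepCycles {V : Type} (G : SimpleGraph V) (k : ℕ) : Prop :=
  ∃ (b : Fin k → V) (w : ∀ i, G.Walk (b i) (b i)),
    (∀ i, (w i).IsCycle) ∧
    ∀ i j, i ≠ j →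
      ∀ x ∈ (w i).support, ∀ y ∈ (w j).support, x ≠ y ∧ ¬ G.Adj x y

def OkFree {V : Type} (G : SimpleGraph V) (k : ℕ) : Prop :=
  ¬ HasIndepCycles G k

def ContainsKst {V : Type} (G : SimpleGraph V) (s t : ℕ) : Prop :=
  ∃ A B : Finset V, Disjoint A B ∧ A.card = s ∧ B.card = t ∧
    ∀ a ∈ A, ∀ b ∈ B, G.Adj a b

def IsFVS {V : Type} (G : SimpleGraph V) (X : Set V) : Prop :=
  (G.induce {v | v ∉ X}).IsAcyclic

def GirthAtLeast {V : Type} (G : SimpleGraph V) (ℓ : ℕ) : Prop :=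
  ∀ (v : V) (w : G.Walk v v), w.IsCycle → ℓ ≤ w.length

noncomputable def cycleRank {V : Type} (G : SimpleGraph V) : ℤ :=
  (Nat.card G.edgeSet : ℤ) - (Nat.card V : ℤ) + (Nat.card G.ConnectedComponent : ℤ)

/-- The graph `G_k`: a path `u_1, …, u_{2^k−1}` together with an independent set
`v_0, …, v_{k−1}`, where `v_i` is adjacent to `u_j` iff `i` is the 2-adic valuation
of `j`. The path vertex `u_j` is represented by `Sum.inl ⟨j - 1, _⟩`. -/
def Gk (k : ℕ) : SimpleGraph (Fin (2 ^ k - 1) ⊕ Fin k) :=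
  SimpleGraph.fromRel fun a b =>
    match a, b with
    | Sum.inl i, Sum.inl j => (j : ℕ) = (i : ℕ) + 1
    | Sum.inl j, Sum.inr i => padicValNat 2 ((j : ℕ) + 1) = (i : ℕ)
    | _, _ => False

/-!
Everything is governed by the 2-adic valuation `ν₂`. If a cycle avoids `v_0, …, v_{l-1}`, then
each path vertex `u_j` on it with `ν₂(j) < l` has both path neighbours on it, so the cycle
contains a whole stretch of the path between two consecutive multiples of `2^l`, one of which
has valuation exactly `l`. Hence, by induction on `l`, two independent cycles never meet `v_l`,
since `v_l` is adjacent to the vertices of valuation `l` on the other cycle; but no cycle avoids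
all of `v_0, …, v_{k-1}`, as no path vertex has valuation `k`. Any two distinct vertices have at
most two common neighbours, which excludes `K_{2,3}`, and deleting `v_0, …, v_{k-2}` leaves a
tree.
-/

theorem Set.encard_le_two_of_injOn {α : Type*} {s : Set α} {f : α → Bool} (h : s.InjOn f) :
    s.encard ≤ 2 := by
  rw [← h.encard_image]
  calc (f '' s).encard ≤ (Set.univ : Set Bool).encard := Set.encard_le_encard (Set.subset_univ _)
    _ = 2 := by rw [Set.encard_univ, ENat.card_eq_coe_fintype_card]; rfl

namespace SimpleGraph

section

variable {V : Type*} {G : SimpleGraph V}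

theorem Walk.IsCycle.exists_adj_ne_adj {u v : V} {c : G.Walk u u} (hc : c.IsCycle)
    (hv : v ∈ c.support) :
    ∃ y z, y ≠ z ∧ y ∈ c.support ∧ z ∈ c.support ∧ G.Adj v y ∧ G.Adj v z := by
  obtain ⟨y, z, hyz, hnbr⟩ := Set.ncard_eq_two.mp (hc.ncard_neighborSet_toSubgraph_eq_two hv)
  have hmem : ∀ t ∈ c.toSubgraph.neighborSet v, t ∈ c.support ∧ G.Adj v t := fun t ht =>
    ⟨c.mem_verts_toSubgraph.mp (c.toSubgraph.edge_vert ht.symm), c.toSubgraph.adj_sub ht⟩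
  obtain ⟨hy, hvy⟩ := hmem y (by simp [hnbr])
  obtain ⟨hz, hvz⟩ := hmem z (by simp [hnbr])
  exact ⟨y, z, hyz, hy, hz, hvy, hvz⟩

/-- On a cycle, the vertex of largest potential has two distinct neighbours of no larger
potential. -/
theorem isAcyclic_of_forall_adj_le_eq {α : Type*} [LinearOrder α] (f : V → α)
    (h : ∀ x y z, G.Adj x y → G.Adj x z → f y ≤ f x → f z ≤ f x → y = z) : G.IsAcyclic := by
  classical
  intro u c hc
  obtain ⟨x, hx, hmax⟩ := c.support.toFinset.exists_max_image f ⟨u, by simp⟩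
  rw [List.mem_toFinset] at hx
  obtain ⟨y, z, hyz, hy, hz, hxy, hxz⟩ := hc.exists_adj_ne_adj hx
  exact hyz (h x y z hxy hxz (hmax y (by simpa using hy)) (hmax z (by simpa using hz)))

end

theorem not_containsKst_two_three_of_encard_commonNeighbors_le_two {V : Type} {G : SimpleGraph V}
    (h : ∀ x y, x ≠ y → (G.commonNeighbors x y).encard ≤ 2) : ¬ ContainsKst G 2 3 := by
  classical
  rintro ⟨A, B, -, hA, hB, hadj⟩
  obtain ⟨x, y, hxy, rfl⟩ := Finset.card_eq_two.mp hA
  have hsub : (B : Set V) ⊆ G.commonNeighbors x y := fun z hz =>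
    ⟨hadj x (by simp) z hz, hadj y (by simp) z hz⟩
  have := (Set.encard_le_encard hsub).trans (h x y hxy)
  rw [Set.encard_coe_eq_coe_finsetCard, hB] at this
  norm_num at this

end SimpleGraph

theorem mul_div_mem_and_mul_succ_div_mem {S : Set ℕ} {m j : ℕ} (hm : 0 < m)
    (hclosed : ∀ i ∈ S, ¬ m ∣ i → i - 1 ∈ S ∧ i + 1 ∈ S) (hj : j ∈ S) (hjm : ¬ m ∣ j) :
    m * (j / m) ∈ S ∧ m * (j / m + 1) ∈ S := by
  set q := j / m
  have hr0 : 0 < j % m := Nat.pos_of_ne_zero fun h => hjm (Nat.dvd_of_mod_eq_zero h)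
  have hrm : j % m < m := Nat.mod_lt j hm
  have hqr : m * q + j % m ∈ S := by rwa [Nat.div_add_mod]
  have interior : ∀ d, 0 < d → d < m → m * q + d ∈ S →
      m * q + d - 1 ∈ S ∧ m * q + d + 1 ∈ S := fun d hd0 hdm hd =>
    hclosed _ hd <|
      (Nat.dvd_add_right (dvd_mul_right m q)).not.mpr (Nat.not_dvd_of_pos_of_lt hd0 hdm)
  have down : ∀ d ≤ j % m, m * q + d ∈ S := fun d hd =>
    Nat.decreasingInduction (motive := fun d _ => m * q + d ∈ S)
      (fun d hd ih => by simpa using (interior (d + 1) (by omega) (by omega) ih).1) hqr hd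
  have up : ∀ d, j % m ≤ d → d ≤ m → m * q + d ∈ S :=
    Nat.le_induction (fun _ => hqr) fun d hd ih hdm =>
      (interior d (by omega) (by omega) (ih (by omega))).2
  exact ⟨by simpa using down 0 (Nat.zero_le _), by simpa [mul_add] using up m hrm.le le_rfl⟩

theorem padicValNat_two_pow_mul_of_odd {l c : ℕ} (hc : Odd c) :
    padicValNat 2 (2 ^ l * c) = l := by
  rw [padicValNat.mul (by positivity) (by rintro rfl; simp at hc), padicValNat.prime_pow,
    padicValNat.eq_zero_of_not_dvd hc.not_two_dvd_nat, add_zero]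

theorem exists_mem_padicValNat_eq_of_lt {S : Set ℕ} {l j : ℕ} (h0 : 0 ∉ S)
    (hclosed : ∀ i ∈ S, padicValNat 2 i < l → i - 1 ∈ S ∧ i + 1 ∈ S) (hj : j ∈ S)
    (hjl : padicValNat 2 j < l) : ∃ i ∈ S, padicValNat 2 i = l := by
  have hlt_iff : ∀ i ∈ S, padicValNat 2 i < l ↔ ¬ 2 ^ l ∣ i := fun i hi => by
    rw [padicValNat_dvd_iff_le (ne_of_mem_of_not_mem hi h0), not_le]
  obtain ⟨hlo, hhi⟩ := mul_div_mem_and_mul_succ_div_mem (by positivity)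
    (fun i hi hdvd => hclosed i hi ((hlt_iff i hi).mpr hdvd)) hj ((hlt_iff j hj).mp hjl)
  rcases Nat.even_or_odd (j / 2 ^ l) with heven | hodd
  · exact ⟨_, hhi, padicValNat_two_pow_mul_of_odd heven.add_one⟩
  · exact ⟨_, hlo, padicValNat_two_pow_mul_of_odd hodd⟩

theorem exists_mem_padicValNat_eq {S : Set ℕ} {l : ℕ} (hS : S.Nonempty) (h0 : 0 ∉ S)
    (hnbr : ∀ i ∈ S, i - 1 ∈ S ∨ i + 1 ∈ S)
    (hclosed : ∀ i ∈ S, padicValNat 2 i < l → i - 1 ∈ S ∧ i + 1 ∈ S) :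
    ∃ i ∈ S, padicValNat 2 i = l := by
  obtain ⟨j, hj⟩ := hS
  rcases lt_trichotomy (padicValNat 2 j) l with hlt | heq | hgt
  · exact exists_mem_padicValNat_eq_of_lt h0 hclosed hj hlt
  · exact ⟨j, hj, heq⟩
  · have hj0 : j ≠ 0 := ne_of_mem_of_not_mem hj h0
    have heven : 2 ∣ j := dvd_of_one_le_padicValNat (by omega)
    obtain ⟨i, hi, hodd⟩ : ∃ i ∈ S, ¬ 2 ∣ i := by
      rcases hnbr j hj with h | h
      exacts [⟨_, h, by omega⟩, ⟨_, h, by omega⟩]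
    rcases Nat.eq_zero_or_pos l with rfl | hl
    · exact ⟨i, hi, padicValNat.eq_zero_of_not_dvd hodd⟩
    · exact exists_mem_padicValNat_eq_of_lt h0 hclosed hi
        (by rwa [padicValNat.eq_zero_of_not_dvd hodd])

theorem eq_two_pow_of_padicValNat_eq {n j : ℕ} (hj0 : 0 < j) (hj : j < 2 ^ (n + 1))
    (h : padicValNat 2 j = n) : j = 2 ^ n := by
  obtain ⟨t, rfl⟩ : 2 ^ n ∣ j := h ▸ pow_padicValNat_dvd
  have ht2 : t < 2 := Nat.lt_of_mul_lt_mul_left (by rwa [pow_succ] at hj)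
  have ht0 : t ≠ 0 := by rintro rfl; simp at hj0
  obtain rfl : t = 1 := by omega
  exact mul_one _

namespace Gk

open Sum

variable {k : ℕ}

@[simp] theorem adj_inl_inl {a b : Fin (2 ^ k - 1)} :
    (Gk k).Adj (inl a) (inl b) ↔ (b : ℕ) = a + 1 ∨ (a : ℕ) = b + 1 := by
  simp only [Gk, fromRel_adj, ne_eq, inl.injEq, and_iff_right_iff_imp]
  rintro h rfl
  omega

@[simp] theorem adj_inl_inr {a : Fin (2 ^ k - 1)} {i : Fin k} :
    (Gk k).Adj (inl a) (inr i) ↔ padicValNat 2 (a + 1) = i := by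
  simp [Gk]

@[simp] theorem adj_inr_inl {a : Fin (2 ^ k - 1)} {i : Fin k} :
    (Gk k).Adj (inr i) (inl a) ↔ padicValNat 2 (a + 1) = i := by
  simp [Gk]

@[simp] theorem not_adj_inr_inr {i j : Fin k} : ¬ (Gk k).Adj (inr i) (inr j) := by
  simp [Gk]

section Cycle

variable {u : Fin (2 ^ k - 1) ⊕ Fin k} {c : (Gk k).Walk u u}

theorem exists_inl_mem_support (hc : c.IsCycle) : ∃ a, inl a ∈ c.support := by
  obtain ⟨y, -, -, hy, -, huy, -⟩ := hc.exists_adj_ne_adj c.start_mem_support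
  rcases u with a | i
  · exact ⟨a, c.start_mem_support⟩
  rcases y with b | j
  · exact ⟨b, hy⟩
  · exact absurd huy not_adj_inr_inr

theorem exists_inl_adj_mem_support (hc : c.IsCycle) {a : Fin (2 ^ k - 1)}
    (ha : inl a ∈ c.support) :
    ∃ b : Fin (2 ^ k - 1), inl b ∈ c.support ∧ ((b : ℕ) = a + 1 ∨ (a : ℕ) = b + 1) := by
  obtain ⟨y, z, hyz, hy, hz, hay, haz⟩ := hc.exists_adj_ne_adj ha
  rcases y with b | i
  · exact ⟨b, hy, adj_inl_inl.mp hay⟩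
  rcases z with b | j
  · exact ⟨b, hz, adj_inl_inl.mp haz⟩
  rw [adj_inl_inr] at hay haz
  exact absurd (congrArg inr (Fin.ext (hay.symm.trans haz))) hyz

/-- The only `v`-neighbour of `u_{a+1}` is `v_{ν₂(a+1)}`, which is not on the cycle. -/
theorem inl_pred_succ_mem_support (hc : c.IsCycle) {l : ℕ}
    (hv : ∀ i : Fin k, (i : ℕ) < l → inr i ∉ c.support) {a : Fin (2 ^ k - 1)}
    (ha : inl a ∈ c.support) (hal : padicValNat 2 (a + 1) < l) :
    (∃ b : Fin (2 ^ k - 1), inl b ∈ c.support ∧ (b : ℕ) + 1 = a) ∧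
      ∃ b : Fin (2 ^ k - 1), inl b ∈ c.support ∧ (b : ℕ) = a + 1 := by
  obtain ⟨y, z, hyz, hy, hz, hay, haz⟩ := hc.exists_adj_ne_adj ha
  have hinl : ∀ t ∈ c.support, (Gk k).Adj (inl a) t →
      ∃ b : Fin (2 ^ k - 1), t = inl b ∧ ((b : ℕ) = a + 1 ∨ (a : ℕ) = b + 1) := by
    rintro (b | i) ht hat
    · exact ⟨b, rfl, adj_inl_inl.mp hat⟩
    · exact absurd ht (hv i (adj_inl_inr.mp hat ▸ hal))
  obtain ⟨b, rfl, hb⟩ := hinl y hy hay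
  obtain ⟨b', rfl, hb'⟩ := hinl z hz haz
  have hbb' : (b : ℕ) ≠ b' := fun h => hyz (by rw [Fin.ext h])
  rcases hb with hb | hb
  · exact ⟨⟨b', hz, by omega⟩, ⟨b, hy, hb⟩⟩
  · exact ⟨⟨b, hy, hb.symm⟩, ⟨b', hz, by omega⟩⟩

theorem exists_inl_mem_support_padicValNat_eq (hc : c.IsCycle) (l : ℕ)
    (hv : ∀ i : Fin k, (i : ℕ) < l → inr i ∉ c.support) :
    ∃ a : Fin (2 ^ k - 1), inl a ∈ c.support ∧ padicValNat 2 (a + 1) = l := by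
  obtain ⟨_, ⟨a, rfl, ha⟩, hal⟩ := exists_mem_padicValNat_eq (l := l)
    (S := {j | ∃ a : Fin (2 ^ k - 1), (a : ℕ) + 1 = j ∧ inl a ∈ c.support})
    (by obtain ⟨a, ha⟩ := exists_inl_mem_support hc; exact ⟨_, a, rfl, ha⟩)
    (by rintro ⟨a, h, -⟩; omega)
    (by
      rintro _ ⟨a, rfl, ha⟩
      obtain ⟨b, hb, hab | hab⟩ := exists_inl_adj_mem_support hc ha
      exacts [Or.inr ⟨b, by omega, hb⟩, Or.inl ⟨b, by omega, hb⟩])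
    (by
      rintro _ ⟨a, rfl, ha⟩ hal
      obtain ⟨⟨b, hb, hba⟩, ⟨b', hb', hb'a⟩⟩ := inl_pred_succ_mem_support hc hv ha hal
      exact ⟨⟨b, by omega, hb⟩, ⟨b', by omega, hb'⟩⟩)
  exact ⟨a, ha, hal⟩

theorem exists_inr_mem_support (hc : c.IsCycle) : ∃ i, inr i ∈ c.support := by
  by_contra! h
  obtain ⟨a, -, ha⟩ := exists_inl_mem_support_padicValNat_eq hc k fun i _ => h i
  have hdvd : 2 ^ padicValNat 2 (a + 1) ∣ (a : ℕ) + 1 := pow_padicValNat_dvd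
  have := Nat.le_of_dvd (Nat.succ_pos _) hdvd
  rw [ha] at this
  have := a.isLt
  omega

end Cycle

theorem okFree_two (k : ℕ) : OkFree (Gk k) 2 := by
  rintro ⟨b, w, hcyc, hind⟩
  have avoid : ∀ l, ∀ i : Fin k, (i : ℕ) < l → inr i ∉ (w 0).support ∧ inr i ∉ (w 1).support := by
    intro l
    induction l with
    | zero => intro i hi; omega
    | succ l ih =>
      intro i hi
      rcases Nat.lt_or_ge i l with hil | hil
      · exact ih i hil
      obtain ⟨a₀, ha₀, hv₀⟩ :=
        exists_inl_mem_support_padicValNat_eq (hcyc 0) l fun j hj => (ih j hj).1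
      obtain ⟨a₁, ha₁, hv₁⟩ :=
        exists_inl_mem_support_padicValNat_eq (hcyc 1) l fun j hj => (ih j hj).2
      refine ⟨fun hi₀ => ?_, fun hi₁ => ?_⟩
      · exact (hind 0 1 (by decide) _ hi₀ _ ha₁).2 (adj_inr_inl.mpr (by omega))
      · exact (hind 1 0 (by decide) _ hi₁ _ ha₀).2 (adj_inr_inl.mpr (by omega))
  obtain ⟨i, hi⟩ := exists_inr_mem_support (hcyc 0)
  exact (avoid k i i.isLt).1 hi

theorem injOn_commonNeighbors_inl {a : Fin (2 ^ k - 1)} {y : Fin (2 ^ k - 1) ⊕ Fin k}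
    (hy : inl a ≠ y) : ∃ f : Fin (2 ^ k - 1) ⊕ Fin k → Bool,
      ((Gk k).commonNeighbors (inl a) y).InjOn f := by
  rcases y with b | i
  · have hab : (a : ℕ) ≠ b := fun h => hy (by rw [Fin.ext h])
    refine ⟨isLeft, ?_⟩
    rintro (c | j) ⟨hac, hbc⟩ (c' | j') ⟨hac', hbc'⟩ hcc'
    · simp only [mem_neighborSet, adj_inl_inl] at hac hbc hac' hbc'
      exact congrArg inl (Fin.ext (by omega))
    · cases hcc'
    · cases hcc'
    · simp only [mem_neighborSet, adj_inl_inr] at hac hac'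
      exact congrArg inr (Fin.ext (hac.symm.trans hac'))
  · refine ⟨Sum.elim (fun c => decide (c < a)) fun _ => false, ?_⟩
    rintro (c | j) ⟨hac, hic⟩ (c' | j') ⟨hac', hic'⟩ hcc'
    · simp only [mem_neighborSet, adj_inl_inl] at hac hac'
      simp only [Sum.elim_inl, decide_eq_decide, Fin.lt_def] at hcc'
      exact congrArg inl (Fin.ext (by omega))
    all_goals simp at hic hic'

theorem commonNeighbors_inr_inr {i j : Fin k} (hij : i ≠ j) :
    (Gk k).commonNeighbors (inr i) (inr j) = ∅ := by
  refine Set.eq_empty_of_forall_notMem ?_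
  rintro (a | l) ⟨hi, hj⟩
  · exact hij (Fin.ext ((adj_inr_inl.mp hi).symm.trans (adj_inr_inl.mp hj)))
  · exact not_adj_inr_inr hi

theorem encard_commonNeighbors_le_two {x y : Fin (2 ^ k - 1) ⊕ Fin k} (hxy : x ≠ y) :
    ((Gk k).commonNeighbors x y).encard ≤ 2 := by
  rcases x with a | i
  · obtain ⟨f, hf⟩ := injOn_commonNeighbors_inl hxy
    exact Set.encard_le_two_of_injOn hf
  rcases y with b | j
  · obtain ⟨f, hf⟩ := injOn_commonNeighbors_inl hxy.symm
    rw [commonNeighbors_symm]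
    exact Set.encard_le_two_of_injOn hf
  · rw [commonNeighbors_inr_inr fun h => hxy (congrArg inr h)]
    simp

theorem not_containsKst_two_three (k : ℕ) : ¬ ContainsKst (Gk k) 2 3 :=
  not_containsKst_two_three_of_encard_commonNeighbors_le_two fun _ _ =>
    encard_commonNeighbors_le_two

def fvs (n : ℕ) : Finset (Fin (2 ^ (n + 1) - 1) ⊕ Fin (n + 1)) :=
  Finset.univ.map (Fin.castSuccEmb.trans Function.Embedding.inr)

theorem card_fvs (n : ℕ) : (fvs n).card = n := by
  simp [fvs]

theorem inr_mem_fvs_iff {n : ℕ} {i : Fin (n + 1)} : inr i ∈ fvs n ↔ i ≠ Fin.last n := by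
  simp [fvs, Fin.exists_castSucc_eq]

/-- Removing `v_0, …, v_{n-1}` leaves the path with `v_n` pendant at `u_{2^n}`; ordering path
vertices by position and `v_n` last, every vertex has at most one lower neighbour. -/
theorem isFVS_fvs (n : ℕ) : IsFVS (Gk (n + 1)) ↑(fvs n) := by
  refine isAcyclic_of_forall_adj_le_eq
    (fun v => Sum.elim (fun a : Fin _ => (a : ℕ)) (fun _ => 2 ^ (n + 1)) v.1) ?_
  rintro ⟨x, hx⟩ ⟨y, _⟩ ⟨z, _⟩ hxy hxz hy hz
  simp only [comap_adj, Function.Embedding.subtype_apply] at hxy hxz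
  simp only [Set.mem_ofPred_eq, Finset.mem_coe] at hx
  refine Subtype.ext ?_
  rcases x with a | i
  · have ha := a.isLt
    rcases y with b | j <;> rcases z with c | l <;>
      simp only [adj_inl_inl, Sum.elim_inl, Sum.elim_inr] at hxy hxz hy hz
    · exact congrArg inl (Fin.ext (by omega))
    all_goals omega
  · obtain rfl : i = Fin.last n := by simpa [inr_mem_fvs_iff] using hx
    rcases y with b | j <;> rcases z with c | l <;>
      simp only [adj_inr_inl, not_adj_inr_inr, Fin.val_last] at hxy hxz
    have hb := eq_two_pow_of_padicValNat_eq (Nat.succ_pos _) (by omega) hxy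
    have hc := eq_two_pow_of_padicValNat_eq (Nat.succ_pos _) (by omega) hxz
    exact congrArg inl (Fin.ext (by omega))

end Gk

/-- For every `k ≥ 1`, the graph `G_k` is `O_2`-free, contains no
`K_{2,3}` subgraph, and has a feedback vertex set of size at most `k - 1`. -/
theorem stmt1 (k : ℕ) (hk : 1 ≤ k) :
    OkFree (Gk k) 2 ∧ ¬ ContainsKst (Gk k) 2 3 ∧
      ∃ X : Finset (Fin (2 ^ k - 1) ⊕ Fin k),
        IsFVS (Gk k) ↑X ∧ X.card ≤ k - 1 := by
  obtain ⟨n, rfl⟩ := Nat.exists_eq_add_of_le' hk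
  exact ⟨Gk.okFree_two _, Gk.not_containsKst_two_three _, Gk.fvs n, Gk.isFVS_fvs n,
    (Gk.card_fvs n).le⟩
end

section
/- There is a function f : ℕ × ℕ × ℕ → ℕ such that for all integers ℓ ≥ 1, t ≥ 2, k ≥ 1, every O_k-free graph G that does not contain K_{t,t} as a subgraph contains at most f(ℓ,t,k) pairwise vertex-disjoint cycles of length at most ℓ. -/
/-!
Take `m` disjoint cycles of length at most `ℓ` and join two of them when some edge of `G` runs
between them. By Ramsey's theorem, if `m` is large this auxiliary graph has either an independent
set of size `k`, i.e. `k` independent cycles, or a huge clique of mutually touching cycles.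
In the clique, repeatedly fix a cycle and pigeonhole over its at most `ℓ` vertices: this yields
many vertices `u`, taken from distinct cycles, and `t` further cycles each of which every `u`
touches. Pigeonholing the `u` once more over the at most `2 ^ (t ℓ)` sets of neighbours they can
choose in those `t` cycles gives `t` of them with the same `t` neighbours, a copy of `K_{t,t}`.
-/

open SimpleGraph

open Finset

namespace SimpleGraph

variable {V : Type} {ι : Type*}

theorem exists_isNClique_or_isNIndepSet_of_choose_le {α : Type*} (H : SimpleGraph α) (s k : ℕ)
    (S : Finset α) (hS : (s + k).choose s ≤ #S) :
    ∃ T ⊆ S, H.IsNClique s T ∨ H.IsNIndepSet k T := by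
  classical
  simp_rw [← isNClique_compl]
  induction s generalizing k S with
  | zero => exact ⟨∅, empty_subset S, .inl (by simp)⟩
  | succ s ihs =>
    induction k generalizing S with
    | zero => exact ⟨∅, empty_subset S, .inr (by simp)⟩
    | succ k ihk =>
      obtain ⟨a, ha⟩ : S.Nonempty :=
        card_pos.mp (lt_of_lt_of_le (Nat.choose_pos (by omega)) hS)
      set N := (S.erase a).filter (H.Adj a)
      set M := (S.erase a).filter (fun b => ¬ H.Adj a b)
      have hNM : #N + #M = #S - 1 := by
        rw [card_filter_add_card_filter_not, card_erase_of_mem ha]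
      have hpascal : (s + 1 + (k + 1)).choose (s + 1)
          = (s + (k + 1)).choose s + (s + 1 + k).choose (s + 1) := by
        rw [show s + 1 + (k + 1) = s + (k + 1) + 1 by omega, Nat.choose_succ_succ,
          show s + (k + 1) = s + 1 + k by omega]
      have hNS : N ⊆ S := (filter_subset _ _).trans (erase_subset a S)
      have hMS : M ⊆ S := (filter_subset _ _).trans (erase_subset a S)
      by_cases hN : (s + (k + 1)).choose s ≤ #N
      · obtain ⟨T, hTN, hT | hT⟩ := ihs (k + 1) N hN
        · refine ⟨insert a T, insert_subset ha (hTN.trans hNS), .inl ?_⟩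
          exact hT.insert fun b hb => (mem_filter.mp (hTN hb)).2
        · exact ⟨T, hTN.trans hNS, .inr hT⟩
      · obtain ⟨T, hTM, hT | hT⟩ := ihk M (by omega)
        · exact ⟨T, hTM.trans hMS, .inl hT⟩
        · refine ⟨insert a T, insert_subset ha (hTM.trans hMS), .inr ?_⟩
          refine hT.insert fun b hb => ?_
          obtain ⟨hb, hab⟩ := mem_filter.mp (hTM hb)
          exact (compl_adj H a b).mpr ⟨(ne_of_mem_erase hb).symm, hab⟩

theorem Walk.card_support_toFinset_le_length [DecidableEq V] {G : SimpleGraph V} {v : V}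
    {p : G.Walk v v} (hp : ¬ p.Nil) : #p.support.toFinset ≤ p.length := by
  rw [← p.cons_tail_support, List.toFinset_cons,
    insert_eq_of_mem (List.mem_toFinset.mpr (p.end_mem_tail_support hp))]
  exact (List.toFinset_card_le _).trans (by simp [p.length_support])

def touchGraph (G : SimpleGraph V) (W : ι → Finset V) : SimpleGraph ι where
  Adj i j := i ≠ j ∧ ∃ x ∈ W i, ∃ y ∈ W j, G.Adj x y
  symm := ⟨fun _ _ ⟨hne, x, hx, y, hy, hxy⟩ => ⟨hne.symm, y, hy, x, hx, hxy.symm⟩⟩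
  loopless := ⟨fun _ h => h.1 rfl⟩

def fanBound (ℓ t : ℕ) : ℕ → ℕ
  | 0 => t
  | n + 1 => ℓ * fanBound ℓ t n + 1

def touchCliqueBound (ℓ t : ℕ) : ℕ :=
  fanBound ℓ t (t * 2 ^ (t * ℓ) + 1)

section Touching

variable [DecidableEq V] (G : SimpleGraph V) {W : ι → Finset V} {C : Finset ι}
  {ℓ t : ℕ}

theorem exists_fan_of_isClique_touchGraph [DecidableEq ι] (hne : ∀ i ∈ C, (W i).Nonempty)
    (hcard : ∀ i ∈ C, #(W i) ≤ ℓ) (hdisj : (C : Set ι).PairwiseDisjoint W)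
    (hC : (G.touchGraph W).IsClique C) (n : ℕ) {A : Finset ι} (hAC : A ⊆ C)
    (hA : fanBound ℓ t n ≤ #A) :
    ∃ B ⊆ A, ∃ U ⊆ (A \ B).biUnion W,
      t ≤ #B ∧ #U = n ∧ ∀ u ∈ U, ∀ j ∈ B, ∃ y ∈ W j, G.Adj u y := by
  classical
  induction n generalizing A with
  | zero => exact ⟨A, Subset.rfl, ∅, empty_subset _, hA, rfl, by simp⟩
  | succ n ih =>
    obtain ⟨i, hi⟩ : A.Nonempty := card_pos.mp (by simp only [fanBound] at hA; omega)
    let F (u : V) := (A.erase i).filter fun j => ∃ y ∈ W j, G.Adj u y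
    have hcover : #(A.erase i) ≤ ∑ u ∈ W i, #(F u) := by
      refine (card_le_card fun j hj => ?_).trans card_biUnion_le
      obtain ⟨-, x, hx, y, hy, hxy⟩ := hC (hAC hi) (hAC (mem_of_mem_erase hj))
        (ne_of_mem_erase hj).symm
      exact mem_biUnion.mpr ⟨x, hx, mem_filter.mpr ⟨hj, y, hy, hxy⟩⟩
    obtain ⟨u, hu, hFu⟩ : ∃ u ∈ W i, fanBound ℓ t n ≤ #(F u) := by
      refine exists_le_of_sum_le (hne i (hAC hi)) ?_
      calc ∑ _ ∈ W i, fanBound ℓ t n = #(W i) * fanBound ℓ t n := by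
            rw [sum_const, smul_eq_mul]
        _ ≤ ℓ * fanBound ℓ t n := Nat.mul_le_mul_right _ (hcard i (hAC hi))
        _ ≤ #(A.erase i) := by rw [card_erase_of_mem hi]; simp only [fanBound] at hA; omega
        _ ≤ _ := hcover
    have hFA : F u ⊆ A.erase i := filter_subset _ _
    obtain ⟨B, hBF, U, hUB, htB, hU, hadj⟩ := ih ((hFA.trans (erase_subset i A)).trans hAC) hFu
    have hiB : i ∉ B := fun h => notMem_erase i A (hFA (hBF h))
    have huU : u ∉ U := by
      intro h
      obtain ⟨j, hj, hu'⟩ := mem_biUnion.mp (hUB h)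
      have hjF := (mem_sdiff.mp hj).1
      have hij : i ≠ j := fun h => notMem_erase i A (h ▸ hFA hjF)
      exact Finset.disjoint_left.mp (hdisj (hAC hi) (hAC (mem_of_mem_erase (hFA hjF))) hij) hu hu'
    refine ⟨B, hBF.trans (hFA.trans (erase_subset i A)), insert u U, insert_subset ?_ ?_, htB,
      by rw [card_insert_of_notMem huU, hU], ?_⟩
    · exact mem_biUnion.mpr ⟨i, mem_sdiff.mpr ⟨hi, hiB⟩, hu⟩
    · exact hUB.trans (biUnion_subset_biUnion_of_subset_left _
        (sdiff_subset_sdiff (hFA.trans (erase_subset i A)) Subset.rfl))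
    · intro v hv j hj
      rcases mem_insert.mp hv with rfl | hv
      · exact (mem_filter.mp (hBF hj)).2
      · exact hadj v hv j hj

theorem containsKst_of_forall_exists_adj {B : Finset ι} (hB : #B = t)
    (hdisj : (B : Set ι).PairwiseDisjoint W) {U : Finset V} (hUB : Disjoint U (B.biUnion W))
    (hU : t * 2 ^ #(B.biUnion W) < #U) (hadj : ∀ u ∈ U, ∀ j ∈ B, ∃ y ∈ W j, G.Adj u y) :
    ContainsKst G t t := by
  choose! f hfW hfadj using hadj
  have hpattern : ∀ u ∈ U, B.image (f u) ∈ (B.biUnion W).powerset := fun u hu =>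
    mem_powerset.mpr <| image_subset_iff.mpr fun j hj => mem_biUnion.mpr ⟨j, hj, hfW u hu j hj⟩
  obtain ⟨P, -, hP⟩ := exists_lt_card_fiber_of_mul_lt_card_of_maps_to hpattern
    (by rwa [card_powerset, mul_comm])
  obtain ⟨S, hSP, hSt⟩ := exists_subset_card_eq hP.le
  obtain ⟨u₀, hu₀⟩ := card_pos.mp (by omega : 0 < #(U.filter fun u => B.image (f u) = P))
  obtain ⟨hu₀U, rfl⟩ := mem_filter.mp hu₀
  have hmemS : ∀ a ∈ S, a ∈ U ∧ B.image (f a) = B.image (f u₀) := fun a ha =>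
    mem_filter.mp (hSP ha)
  refine ⟨S, B.image (f u₀), Finset.disjoint_left.mpr fun a ha haP => ?_, hSt, ?_,
    fun a ha b hb => ?_⟩
  · obtain ⟨haU, hpa⟩ := hmemS a ha
    obtain ⟨j, hj, hja⟩ := mem_image.mp (hpa ▸ haP)
    exact Finset.disjoint_left.mp hUB haU (mem_biUnion.mpr ⟨j, hj, hja ▸ hfW a haU j hj⟩)
  · rw [card_image_of_injOn, hB]
    intro j hj j' hj' hjj'
    by_contra hne
    exact Finset.disjoint_left.mp (hdisj hj hj' hne) (hfW u₀ hu₀U j hj)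
      (hjj' ▸ hfW u₀ hu₀U j' hj')
  · obtain ⟨haU, hpa⟩ := hmemS a ha
    obtain ⟨j, hj, rfl⟩ := mem_image.mp (hpa ▸ hb)
    exact hfadj a haU j hj

theorem containsKst_of_isClique_touchGraph (hne : ∀ i ∈ C, (W i).Nonempty)
    (hcard : ∀ i ∈ C, #(W i) ≤ ℓ) (hdisj : (C : Set ι).PairwiseDisjoint W)
    (hC : (G.touchGraph W).IsClique C) (hbig : touchCliqueBound ℓ t ≤ #C) :
    ContainsKst G t t := by
  classical
  obtain ⟨B, hBC, U, hUB, htB, hU, hadj⟩ :=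
    exists_fan_of_isClique_touchGraph G hne hcard hdisj hC _ Subset.rfl hbig
  obtain ⟨T, hTB, hTt⟩ := exists_subset_card_eq htB
  have hTC : T ⊆ C := hTB.trans hBC
  have hUT : Disjoint U (T.biUnion W) := by
    refine Finset.disjoint_of_subset_left hUB ((disjoint_biUnion_left _ _ _).mpr fun i hi =>
      (disjoint_biUnion_right _ _ _).mpr fun j hj => ?_)
    obtain ⟨hiC, hiB⟩ := mem_sdiff.mp hi
    exact hdisj hiC (hTC hj) fun hij => hiB (hij ▸ hTB hj)
  have hunion : #(T.biUnion W) ≤ t * ℓ := by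
    calc #(T.biUnion W) ≤ ∑ j ∈ T, #(W j) := card_biUnion_le
      _ ≤ #T • ℓ := sum_le_card_nsmul T _ ℓ fun j hj => hcard j (hTC hj)
      _ = t * ℓ := by rw [hTt, smul_eq_mul]
  refine containsKst_of_forall_exists_adj G hTt (hdisj.subset (by simpa using hTC)) hUT ?_
    fun u hu j hj => hadj u hu j (hTB hj)
  calc t * 2 ^ #(T.biUnion W) ≤ t * 2 ^ (t * ℓ) := by gcongr; norm_num
    _ < #U := by omega

end Touching

theorem hasIndepCycles_of_isNIndepSet_touchGraph [DecidableEq V] {G : SimpleGraph V} {b : ι → V}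
    {w : ∀ i, G.Walk (b i) (b i)} (hcyc : ∀ i, (w i).IsCycle)
    (hdisj : Pairwise fun i j => Disjoint (w i).support.toFinset (w j).support.toFinset)
    {k : ℕ} {T : Finset ι}
    (hT : (G.touchGraph fun i => (w i).support.toFinset).IsNIndepSet k T) :
    HasIndepCycles G k := by
  let e := (T.equivFinOfCardEq hT.card_eq).symm
  refine ⟨fun s => b (e s), fun s => w (e s), fun s => hcyc _, fun s s' hss x hx y hy => ?_⟩
  have hne : (e s : ι) ≠ e s' := fun h => hss (e.injective (Subtype.ext h))
  refine ⟨fun hxy => Finset.disjoint_left.mp (hdisj hne) (List.mem_toFinset.mpr hx)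
    (List.mem_toFinset.mpr (hxy ▸ hy)), fun hadj => ?_⟩
  exact hT.isIndepSet (e s).2 (e s').2 hne
    ⟨hne, x, List.mem_toFinset.mpr hx, y, List.mem_toFinset.mpr hy, hadj⟩

end SimpleGraph

/-- There is a function `f : ℕ × ℕ × ℕ → ℕ` such that for all
`ℓ ≥ 1`, `t ≥ 2`, `k ≥ 1`, every `O_k`-free graph with no `K_{t,t}` subgraph contains
at most `f (ℓ, t, k)` pairwise vertex-disjoint cycles of length at most `ℓ`. -/
theorem stmt3 :
    ∃ f : ℕ × ℕ × ℕ → ℕ,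
      ∀ (ℓ t k : ℕ), 1 ≤ ℓ → 2 ≤ t → 1 ≤ k →
        ∀ (V : Type) [Fintype V] (G : SimpleGraph V),
          OkFree G k → ¬ ContainsKst G t t →
          ∀ (m : ℕ) (b : Fin m → V) (w : ∀ i, G.Walk (b i) (b i)),
            (∀ i, (w i).IsCycle) →
            (∀ i, (w i).length ≤ ℓ) →
            (∀ i j, i ≠ j → ∀ x ∈ (w i).support, ∀ y ∈ (w j).support, x ≠ y) →
            m ≤ f (ℓ, t, k) := by
  classical
  refine ⟨fun ⟨ℓ, t, k⟩ => (touchCliqueBound ℓ t + k).choose (touchCliqueBound ℓ t),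
    ?_⟩
  intro ℓ t k _ _ _ V _ G hOk hKst m b w hcyc hlen hsupp
  by_contra! hm
  set W : Fin m → Finset V := fun i => (w i).support.toFinset
  have hdisj : Pairwise fun i j => Disjoint (W i) (W j) := fun i j hij =>
    Finset.disjoint_left.mpr fun x hx hx' =>
      hsupp i j hij x (List.mem_toFinset.mp hx) x (List.mem_toFinset.mp hx') rfl
  obtain ⟨T, -, hT | hT⟩ :=
    (G.touchGraph W).exists_isNClique_or_isNIndepSet_of_choose_le _ k univ
      (by simpa using hm.le)
  · refine hKst (containsKst_of_isClique_touchGraph G (fun i _ => ⟨b i, ?_⟩)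
      (fun i _ => ((w i).card_support_toFinset_le_length (hcyc i).not_nil).trans (hlen i))
      (hdisj.set_pairwise _) hT.isClique hT.card_eq.ge)
    exact List.mem_toFinset.mpr (w i).start_mem_support
  · exact hOk (hasIndepCycles_of_isNIndepSet_touchGraph hcyc hdisj hT)
end

section
/- There is a function g : ℕ × ℕ × ℕ → ℕ such that for all integers ℓ ≥ 3, t ≥ 2, k ≥ 1, every O_k-free graph G that does not contain K_{t,t} as a subgraph contains a set X of at most g(ℓ,t,k) vertices such that G − X has girth at least ℓ (i.e., G − X has no cycle of length less than ℓ). -/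
open SimpleGraph

/-!
Delete the union `X` of a maximum family `𝒞` of pairwise disjoint vertex sets of cycles of
length `< ℓ`; by maximality `G - X` has no such cycle, and `|X| ≤ ℓ |𝒞|`. It remains to bound
`|𝒞|`. As `G` is `O_k`-free, no `k` members of `𝒞` are pairwise anticomplete, so in any large
subfamily some vertex has neighbours in many other members. Iterating this gives many vertices
that all have a neighbour in each of `t` common members. Each such vertex picks one neighbour
per member, which leaves at most `ℓ ^ t` choices, so `t` of them pick the same neighbours: a
`K_{t,t}`.
-/

open Finset

namespace SimpleGraph

variable {V : Type}

def IsAnticomplete (G : SimpleGraph V) (a b : Finset V) : Prop :=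
  ∀ x ∈ a, ∀ y ∈ b, ¬ G.Adj x y

lemma IsAnticomplete.symm {G : SimpleGraph V} {a b : Finset V} (h : G.IsAnticomplete a b) :
    G.IsAnticomplete b a :=
  fun y hy x hx hyx => h x hx y hy hyx.symm

lemma girthAtLeast_induce_of_forall_cycle_meets (G : SimpleGraph V) {ℓ : ℕ} {X : Set V}
    (hX : ∀ (v : V) (w : G.Walk v v), w.IsCycle → w.length < ℓ → ∃ x ∈ w.support, x ∈ X) :
    GirthAtLeast (G.induce {v | v ∉ X}) ℓ := by
  intro v w hw
  by_contra! hlen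
  let ι := (Embedding.induce {v | v ∉ X} : G.induce {v | v ∉ X} ↪g G)
  obtain ⟨x, hx, hxX⟩ := hX _ (w.map ι.toHom)
    ((Walk.isCycle_map_iff_of_injective ι.injective).mpr hw) (by rwa [Walk.length_map])
  rw [Walk.support_map, List.mem_map] at hx
  obtain ⟨z, -, rfl⟩ := hx
  exact z.2 hxX

variable [DecidableEq V]

def IsShortCycleSupport (G : SimpleGraph V) (ℓ : ℕ) (s : Finset V) : Prop :=
  ∃ (v : V) (w : G.Walk v v), w.IsCycle ∧ w.length < ℓ ∧ w.support.toFinset = s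

def IsShortCyclePacking (G : SimpleGraph V) (ℓ : ℕ) (𝒞 : Finset (Finset V)) : Prop :=
  (∀ s ∈ 𝒞, G.IsShortCycleSupport ℓ s) ∧ (𝒞 : Set (Finset V)).PairwiseDisjoint id

lemma IsShortCycleSupport.card_le {G : SimpleGraph V} {ℓ : ℕ} {s : Finset V}
    (hs : G.IsShortCycleSupport ℓ s) : #s ≤ ℓ := by
  obtain ⟨v, w, -, hlen, rfl⟩ := hs
  calc #w.support.toFinset ≤ w.support.length := List.toFinset_card_le _
    _ = w.length + 1 := w.length_support
    _ ≤ ℓ := hlen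

lemma IsShortCyclePacking.subset {G : SimpleGraph V} {ℓ : ℕ} {𝒜 𝒞 : Finset (Finset V)}
    (h𝒞 : G.IsShortCyclePacking ℓ 𝒞) (h𝒜 : 𝒜 ⊆ 𝒞) : G.IsShortCyclePacking ℓ 𝒜 :=
  ⟨fun s hs => h𝒞.1 s (h𝒜 hs), h𝒞.2.subset (coe_subset.mpr h𝒜)⟩

lemma IsShortCyclePacking.exists_mem_support_mem_biUnion {G : SimpleGraph V} {ℓ : ℕ}
    {𝒞 : Finset (Finset V)} (h𝒞 : G.IsShortCyclePacking ℓ 𝒞)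
    (hmax : ∀ 𝒞', G.IsShortCyclePacking ℓ 𝒞' → #𝒞' ≤ #𝒞) {v : V} {w : G.Walk v v}
    (hw : w.IsCycle) (hlen : w.length < ℓ) :
    ∃ x ∈ w.support, x ∈ 𝒞.biUnion id := by
  by_contra! hmeet
  set s := w.support.toFinset
  have hs𝒞 : ∀ c ∈ 𝒞, Disjoint s c := fun c hc => Finset.disjoint_left.mpr fun x hx hxc =>
    hmeet x (List.mem_toFinset.mp hx) (mem_biUnion.mpr ⟨c, hc, hxc⟩)
  have hsnot : s ∉ 𝒞 := fun hs => hmeet v w.start_mem_support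
    (mem_biUnion.mpr ⟨s, hs, List.mem_toFinset.mpr w.start_mem_support⟩)
  have hins : G.IsShortCyclePacking ℓ (insert s 𝒞) := by
    refine ⟨forall_mem_insert _ _ _ |>.mpr ⟨⟨v, w, hw, hlen, rfl⟩, h𝒞.1⟩, ?_⟩
    rw [coe_insert]
    exact h𝒞.2.insert_of_notMem hsnot hs𝒞
  have := hmax _ hins
  rw [card_insert_of_notMem hsnot] at this
  omega

lemma hasIndepCycles_of_pairwise_isAnticomplete {G : SimpleGraph V} {ℓ k : ℕ}
    {𝒜 : Finset (Finset V)} (h𝒜 : G.IsShortCyclePacking ℓ 𝒜)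
    (hanti : (𝒜 : Set (Finset V)).Pairwise G.IsAnticomplete) (hk : k ≤ #𝒜) :
    HasIndepCycles G k := by
  obtain ⟨hcyc, hdisj⟩ := h𝒜
  let e : Fin k ↪ 𝒜 := (Fin.castLEEmb hk).trans 𝒜.equivFin.symm.toEmbedding
  choose b w hw _ hsupp using fun i => hcyc _ (e i).2
  refine ⟨b, w, hw, fun i j hij x hx y hy => ?_⟩
  have hne : (e i : Finset V) ≠ e j := fun h => hij (e.injective (Subtype.ext h))
  rw [← List.mem_toFinset, hsupp] at hx hy
  exact ⟨fun hxy => Finset.disjoint_left.mp (hdisj (e i).2 (e j).2 hne) hx (hxy ▸ hy),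
    hanti (e i).2 (e j).2 hne x hx y hy⟩

lemma exists_vertex_adj_many_of_card_le (G : SimpleGraph V) {ℓ k q : ℕ} {𝒟 : Finset (Finset V)}
    (hdisj : (𝒟 : Set (Finset V)).PairwiseDisjoint id) (hcard : ∀ a ∈ 𝒟, #a ≤ ℓ)
    (hk : ∀ 𝒜 ⊆ 𝒟, (𝒜 : Set (Finset V)).Pairwise G.IsAnticomplete → #𝒜 < k)
    (h𝒟 : k * ℓ * q + k ≤ #𝒟) :
    ∃ x ∈ 𝒟.biUnion id, ∃ ℰ ⊆ 𝒟, q ≤ #ℰ ∧ ∀ e ∈ ℰ, x ∉ e ∧ ∃ y ∈ e, G.Adj x y := by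
  classical
  obtain ⟨𝒜, h𝒜, h𝒜max⟩ := exists_max_image (𝒟.powerset.filter fun 𝒜 : Finset (Finset V) =>
    (𝒜 : Set (Finset V)).Pairwise G.IsAnticomplete) card ⟨∅, by simp⟩
  rw [mem_filter, mem_powerset] at h𝒜
  obtain ⟨h𝒜𝒟, h𝒜anti⟩ := h𝒜
  set U := 𝒜.biUnion id
  let N x := {c ∈ 𝒟 \ 𝒜 | ∃ y ∈ c, G.Adj x y}
  -- by maximality of `𝒜`, each other member has a neighbour in the at most `k ℓ` vertices of `U`
  have hcover : 𝒟 \ 𝒜 ⊆ U.biUnion N := by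
    intro c hc
    obtain ⟨hc𝒟, hc𝒜⟩ := mem_sdiff.mp hc
    by_contra hcN
    have hins : ((insert c 𝒜 : Finset (Finset V)) : Set (Finset V)).Pairwise G.IsAnticomplete := by
      rw [coe_insert]
      refine h𝒜anti.insert_of_notMem hc𝒜 fun a ha => ?_
      have hca : G.IsAnticomplete a c := fun x hx y hy hxy =>
        hcN (mem_biUnion.mpr ⟨x, mem_biUnion.mpr ⟨a, ha, hx⟩, mem_filter.mpr ⟨hc, y, hy, hxy⟩⟩)
      exact ⟨hca.symm, hca⟩
    have := h𝒜max (insert c 𝒜) (mem_filter.mpr ⟨mem_powerset.mpr (insert_subset hc𝒟 h𝒜𝒟), hins⟩)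
    rw [card_insert_of_notMem hc𝒜] at this
    omega
  have hU : #U ≤ k * ℓ := by
    calc #U ≤ #𝒜 * ℓ := card_biUnion_le_card_mul _ _ _ fun a ha => hcard a (h𝒜𝒟 ha)
      _ ≤ k * ℓ := Nat.mul_le_mul_right _ (hk 𝒜 h𝒜𝒟 h𝒜anti).le
  have hsum : ∑ _x ∈ U, q < ∑ x ∈ U, #(N x) := by
    have h𝒜k := hk 𝒜 h𝒜𝒟 h𝒜anti
    calc ∑ _x ∈ U, q = #U * q := by rw [sum_const, smul_eq_mul]
      _ ≤ k * ℓ * q := Nat.mul_le_mul_right _ hU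
      _ < #(𝒟 \ 𝒜) := by rw [card_sdiff_of_subset h𝒜𝒟]; omega
      _ ≤ #(U.biUnion N) := card_le_card hcover
      _ ≤ ∑ x ∈ U, #(N x) := card_biUnion_le
  obtain ⟨x, hxU, hx⟩ := exists_lt_of_sum_lt hsum
  obtain ⟨a, ha, hxa⟩ := mem_biUnion.mp hxU
  refine ⟨x, biUnion_subset_biUnion_of_subset_left id h𝒜𝒟 hxU, N x,
    fun c hc => (mem_sdiff.mp (mem_filter.mp hc).1).1, hx.le,
    fun e he => ⟨fun hxe => ?_, (mem_filter.mp he).2⟩⟩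
  obtain ⟨he𝒟, he𝒜⟩ := mem_sdiff.mp (mem_filter.mp he).1
  exact Finset.disjoint_left.mp (hdisj (h𝒜𝒟 ha) he𝒟 (ne_of_mem_of_not_mem ha he𝒜)) hxa hxe

lemma exists_adj_all_of_iterate_le_card (G : SimpleGraph V) {ℓ k t : ℕ} (r : ℕ)
    {𝒟 : Finset (Finset V)}
    (hdisj : (𝒟 : Set (Finset V)).PairwiseDisjoint id) (hcard : ∀ a ∈ 𝒟, #a ≤ ℓ)
    (hk : ∀ 𝒜 ⊆ 𝒟, (𝒜 : Set (Finset V)).Pairwise G.IsAnticomplete → #𝒜 < k)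
    (h𝒟 : (fun m => k * ℓ * m + k)^[r] t ≤ #𝒟) :
    ∃ A ⊆ 𝒟.biUnion id, #A = r ∧ ∃ ℰ ⊆ 𝒟, #ℰ = t ∧
      ∀ x ∈ A, ∀ e ∈ ℰ, x ∉ e ∧ ∃ y ∈ e, G.Adj x y := by
  induction r generalizing 𝒟 with
  | zero =>
    obtain ⟨ℰ, hℰ𝒟, hℰ⟩ := exists_subset_card_eq h𝒟
    exact ⟨∅, empty_subset _, rfl, ℰ, hℰ𝒟, hℰ, by simp⟩
  | succ r ih =>
    rw [Function.iterate_succ_apply'] at h𝒟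
    obtain ⟨x, hx𝒟, ℰ', hℰ'𝒟, hℰ', hxℰ'⟩ :=
      exists_vertex_adj_many_of_card_le G hdisj hcard hk h𝒟
    obtain ⟨A, hAℰ', hA, ℰ, hℰℰ', hℰ, hAℰ⟩ := ih (hdisj.subset (coe_subset.mpr hℰ'𝒟))
      (fun a ha => hcard a (hℰ'𝒟 ha)) (fun 𝒜 h𝒜 => hk 𝒜 (h𝒜.trans hℰ'𝒟)) hℰ'
    have hxA : x ∉ A := fun hxA => by
      obtain ⟨e, he, hxe⟩ := mem_biUnion.mp (hAℰ' hxA)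
      exact (hxℰ' e he).1 hxe
    refine ⟨insert x A, insert_subset hx𝒟 ((hAℰ'.trans
      (biUnion_subset_biUnion_of_subset_left id hℰ'𝒟))), by rw [card_insert_of_notMem hxA, hA],
      ℰ, hℰℰ'.trans hℰ'𝒟, hℰ, fun x' hx' e he => ?_⟩
    rcases mem_insert.mp hx' with rfl | hx'A
    · exact hxℰ' e (hℰℰ' he)
    · exact hAℰ x' hx'A e he

lemma containsKst_of_adj_all (G : SimpleGraph V) {ℓ s t : ℕ} {A : Finset V}
    {ℰ : Finset (Finset V)} (hdisj : (ℰ : Set (Finset V)).PairwiseDisjoint id)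
    (hcard : ∀ e ∈ ℰ, #e ≤ ℓ) (hℰ : #ℰ = t) (hA : ℓ ^ t * s < #A)
    (hadj : ∀ x ∈ A, ∀ e ∈ ℰ, x ∉ e ∧ ∃ y ∈ e, G.Adj x y) :
    ContainsKst G s t := by
  obtain ⟨a, -⟩ := card_pos.mp (Nat.zero_lt_of_lt hA)
  have : Nonempty V := ⟨a⟩
  choose! φ hφℰ hφadj using fun x hx e he => (hadj x hx e he).2
  have hmaps : ∀ x ∈ A, (fun e _ => φ x e) ∈ ℰ.pi id := fun x hx =>
    mem_pi.mpr fun e he => hφℰ x hx e he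
  have hpi : #(ℰ.pi id) ≤ ℓ ^ t := by
    rw [card_pi, ← hℰ]
    exact prod_le_pow_card _ _ _ hcard
  obtain ⟨ψ, -, hψ⟩ := exists_lt_card_fiber_of_mul_lt_card_of_maps_to hmaps
    (lt_of_le_of_lt (Nat.mul_le_mul_right _ hpi) hA)
  set F := {x ∈ A | (fun e _ => φ x e) = ψ}
  obtain ⟨x₀, hx₀⟩ := card_pos.mp (Nat.zero_lt_of_lt hψ)
  have hFA : F ⊆ A := filter_subset _ _
  have hφF : ∀ x ∈ F, ∀ e ∈ ℰ, φ x e = φ x₀ e := fun x hx e he =>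
    congr_fun₂ ((mem_filter.mp hx).2.trans (mem_filter.mp hx₀).2.symm) e he
  obtain ⟨A', hA'F, hA'⟩ := exists_subset_card_eq hψ.le
  refine ⟨A', ℰ.image (φ x₀), ?_, hA', ?_, ?_⟩
  · refine Finset.disjoint_left.mpr fun x hx hxB => ?_
    obtain ⟨e, he, hex⟩ := mem_image.mp hxB
    have hxF := hA'F hx
    refine (hadj x (hFA hxF) e he).1 ?_
    rw [← hex, ← hφF x hxF e he]
    exact hφℰ x (hFA hxF) e he
  · rw [card_image_of_injOn, hℰ]
    intro e he e' he' hee'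
    by_contra hne
    exact Finset.disjoint_left.mp (hdisj he he' hne) (hφℰ x₀ (hFA hx₀) e he)
      ((hee' : φ x₀ e = φ x₀ e') ▸ hφℰ x₀ (hFA hx₀) e' he')
  · intro x hx b hb
    obtain ⟨e, he, rfl⟩ := mem_image.mp hb
    rw [← hφF x (hA'F hx) e he]
    exact hφadj x (hFA (hA'F hx)) e he

lemma card_lt_iterate_of_not_containsKst (G : SimpleGraph V) {ℓ k t : ℕ}
    {𝒟 : Finset (Finset V)}
    (hdisj : (𝒟 : Set (Finset V)).PairwiseDisjoint id) (hcard : ∀ a ∈ 𝒟, #a ≤ ℓ)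
    (hk : ∀ 𝒜 ⊆ 𝒟, (𝒜 : Set (Finset V)).Pairwise G.IsAnticomplete → #𝒜 < k)
    (hKtt : ¬ ContainsKst G t t) :
    #𝒟 < (fun m => k * ℓ * m + k)^[ℓ ^ t * t + 1] t := by
  by_contra! h𝒟
  obtain ⟨A, -, hA, ℰ, hℰ𝒟, hℰ, hadj⟩ := exists_adj_all_of_iterate_le_card G _ hdisj hcard hk h𝒟
  exact hKtt (containsKst_of_adj_all G (hdisj.subset (coe_subset.mpr hℰ𝒟))
    (fun e he => hcard e (hℰ𝒟 he)) hℰ (by omega) hadj)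

end SimpleGraph

/-- There is a function `g : ℕ × ℕ × ℕ → ℕ` such that for all
`ℓ ≥ 3`, `t ≥ 2`, `k ≥ 1`, every `O_k`-free graph with no `K_{t,t}` subgraph has a set
`X` of at most `g (ℓ, t, k)` vertices such that `G − X` has girth at least `ℓ`. -/
theorem stmt4 :
    ∃ g : ℕ × ℕ × ℕ → ℕ,
      ∀ (ℓ t k : ℕ), 3 ≤ ℓ → 2 ≤ t → 1 ≤ k →
        ∀ (V : Type) [Fintype V] (G : SimpleGraph V),
          OkFree G k → ¬ ContainsKst G t t →
          ∃ X : Finset V, X.card ≤ g (ℓ, t, k) ∧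
            GirthAtLeast (G.induce {v | v ∉ X}) ℓ := by
  classical
  refine ⟨fun ⟨ℓ, t, k⟩ => (fun m => k * ℓ * m + k)^[ℓ ^ t * t + 1] t * ℓ, ?_⟩
  intro ℓ t k _ _ _ V _ G hok hKtt
  obtain ⟨𝒞, h𝒞, hmax⟩ := exists_max_image (univ.filter (G.IsShortCyclePacking ℓ)) card
    ⟨∅, mem_filter.mpr ⟨mem_univ _, by simp [IsShortCyclePacking]⟩⟩
  replace h𝒞 := (mem_filter.mp h𝒞).2
  have hcard : ∀ c ∈ 𝒞, #c ≤ ℓ := fun c hc => (h𝒞.1 c hc).card_le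
  have hk : ∀ 𝒜 ⊆ 𝒞, (𝒜 : Set (Finset V)).Pairwise G.IsAnticomplete → #𝒜 < k :=
    fun 𝒜 h𝒜 hanti => lt_of_not_ge fun hk =>
      hok (hasIndepCycles_of_pairwise_isAnticomplete (h𝒞.subset h𝒜) hanti hk)
  refine ⟨𝒞.biUnion id, ?_, girthAtLeast_induce_of_forall_cycle_meets G fun v w hw hlen =>
    h𝒞.exists_mem_support_mem_biUnion (fun 𝒞' h => hmax 𝒞' (by simpa using h)) hw hlen⟩
  calc #(𝒞.biUnion id) ≤ #𝒞 * ℓ := card_biUnion_le_card_mul _ _ _ hcard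
    _ ≤ _ := Nat.mul_le_mul_right _ (card_lt_iterate_of_not_containsKst G h𝒞.2 hcard hk hKtt).le
end

section
/- There is a function f' : ℕ × ℕ → ℕ such that for all integers t ≥ 2 and k ≥ 1, every O_k-free graph G that does not contain K_{t,t} as a subgraph contains a set X of at most f'(t,k) vertices such that every banana of G contains a vertex of X. -/
open SimpleGraph

/-!
Take a maximal family `F` of banana vertex sets any two of which share only vertices of
degree two. The ends of its members meet every banana, so it suffices to bound `#F`. Colour a
pair `S < S'` of members of `F` by which ends of `S` are adjacent to which ends of `S'`, counting
only ends of degree `≠ 2`. By Ramsey's theorem a large `F` has `k + 2t` members on which this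
colour is constant. If the colour is empty, `k` of them are pairwise independent cycles, because
a cycle can only be left through a vertex of degree `≠ 2`; otherwise the chosen ends of `t` of
them and of `t` later ones span a `K_{t,t}`.
-/

open Finset Function

universe u

theorem exists_prehomogeneous (C : Type*) [Finite C] (n : ℕ) :
    ∃ R, ∀ {α : Type u} [LinearOrder α] (S : Finset α), R ≤ #S → ∀ f : α → α → C,
      ∃ T ⊆ S, #T = n ∧ ∃ g : α → C, ∀ x ∈ T, ∀ y ∈ T, x < y → f x y = g x := by
  classical
  have := Fintype.ofFinite C
  induction n with
  | zero => exact ⟨0, fun S _ f => ⟨∅, empty_subset S, rfl, fun x => f x x, by simp⟩⟩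
  | succ n ih =>
    obtain ⟨R, hR⟩ := ih
    refine ⟨Fintype.card C * R + 1, fun S hS f => ?_⟩
    have hne : S.Nonempty := card_pos.mp (by omega)
    set a := S.min' hne
    have haS : a ∈ S := S.min'_mem hne
    have : Nonempty C := ⟨f a a⟩
    obtain ⟨c, -, hc⟩ := exists_le_card_fiber_of_mul_le_card_of_maps_to
      (s := S.erase a) (f := f a) (n := R) (fun _ _ => mem_univ _) univ_nonempty
      (by rw [card_univ, card_erase_of_mem haS]; omega)
    obtain ⟨T, hTsub, hTcard, g, hg⟩ := hR _ hc f
    have hTS : ∀ x ∈ T, a < x := fun x hx => by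
      have hx' := (mem_filter.mp (hTsub hx)).1
      exact lt_of_le_of_ne (S.min'_le x (mem_of_mem_erase hx')) (ne_of_mem_erase hx').symm
    have haT : a ∉ T := fun h => (hTS a h).false
    refine ⟨insert a T, insert_subset haS fun x hx => mem_of_mem_erase (mem_filter.mp (hTsub hx)).1,
      by rw [card_insert_of_notMem haT, hTcard], Function.update g a c, ?_⟩
    rintro x hx y hy hxy
    rcases mem_insert.mp hx with rfl | hx
    · rcases mem_insert.mp hy with rfl | hy
      · exact absurd hxy (lt_irrefl _)
      · simpa using (mem_filter.mp (hTsub hy)).2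
    · rcases mem_insert.mp hy with rfl | hy
      · exact absurd hxy (hTS x hx).asymm
      · rw [Function.update_of_ne (hTS x hx).ne']
        exact hg x hx y hy hxy

theorem exists_monochromatic_orderEmbedding (C : Type*) [Finite C] (m : ℕ) :
    ∃ R, ∀ n, R ≤ n → ∀ f : Fin n → Fin n → C,
      ∃ (g : Fin m ↪o Fin n) (c : C), ∀ i j, i < j → f (g i) (g j) = c := by
  classical
  have := Fintype.ofFinite C
  obtain ⟨R, hR⟩ := exists_prehomogeneous.{0, _} C (Fintype.card C * m + 1)
  refine ⟨R, fun n hn f => ?_⟩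
  obtain ⟨T, -, hT, g, hg⟩ := hR univ (by rwa [card_univ, Fintype.card_fin]) f
  obtain ⟨c, -, hc⟩ := exists_lt_card_fiber_of_mul_lt_card_of_maps_to
    (s := T) (f := g) (n := m) (fun _ _ => mem_univ _) (by rw [card_univ, hT]; omega)
  refine ⟨{x ∈ T | g x = c}.orderEmbOfCardLe hc.le, c, fun i j hij => ?_⟩
  have hmem := {x ∈ T | g x = c}.orderEmbOfCardLe_mem hc.le
  rw [hg _ (mem_filter.mp (hmem i)).1 _ (mem_filter.mp (hmem j)).1 (by simpa using hij)]
  exact (mem_filter.mp (hmem i)).2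

variable {V : Type} {G : SimpleGraph V}

namespace SimpleGraph.Walk

lemma IsCycle.mem_support_of_adj {u x y : V} {c : G.Walk u u} (hc : c.IsCycle)
    (hx : x ∈ c.support) (hdeg : degN G x = 2) (hxy : G.Adj x y) : y ∈ c.support := by
  have hG : (G.neighborSet x).ncard = 2 := by rw [← Nat.card_coe_set_eq]; exact hdeg
  have heq := Set.eq_of_subset_of_ncard_le (c.toSubgraph.neighborSet_subset x)
    (by rw [hG, hc.ncard_neighborSet_toSubgraph_eq_two hx])
    (Set.finite_of_ncard_ne_zero (by omega))
  have hadj : c.toSubgraph.Adj x y := by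
    rw [← Subgraph.mem_neighborSet, heq]; exact hxy
  exact c.mem_verts_toSubgraph.mp hadj.snd_mem

lemma support_subset_of_closed {T : Set V}
    (hT : ∀ x ∈ T, degN G x = 2 → G.neighborSet x ⊆ T) {a b : V} (w : G.Walk a b)
    (ha : a ∈ T) (hdeg : ∀ x ∈ w.support, x ∈ T → degN G x = 2) : ∀ x ∈ w.support, x ∈ T := by
  induction w with
  | nil => simpa using ha
  | cons h w ih =>
    simp only [support_cons, List.mem_cons, forall_eq_or_imp] at hdeg ⊢
    exact ⟨ha, ih (hT _ ha (hdeg.1 ha) h) hdeg.2⟩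

lemma eq_of_length_eq_one {u v : V} :
    ∀ {p q : G.Walk u v}, p.length = 1 → q.length = 1 → p = q
  | .cons _ .nil, .cons _ .nil, _, _ => rfl

lemma IsPath.isCycle_append_reverse {u v : V} {p q : G.Walk u v} (hp : p.IsPath)
    (hq : q.IsPath) (huv : u ≠ v) (hpq : p ≠ q)
    (hint : ∀ x ∈ p.support, x ∈ q.support → x = u ∨ x = v) :
    (p.append q.reverse).IsCycle := by
  refine hp.isCycle_append hq.reverse (fun x hxp hxq => ?_) ?_
  · have hxq' : x ∈ q.support := by simpa using List.mem_of_mem_tail hxq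
    rcases hint x (List.mem_of_mem_tail hxp) hxq' with rfl | rfl
    · exact (List.nodup_cons.mp (p.cons_tail_support ▸ hp.support_nodup)).1 hxp
    · exact (List.nodup_cons.mp (q.reverse.cons_tail_support ▸ hq.reverse.support_nodup)).1 hxq
  · by_contra! h
    rw [length_reverse] at h
    have hp0 : p.length ≠ 0 := fun h0 => huv (eq_of_length_eq_zero h0)
    have hq0 : q.length ≠ 0 := fun h0 => huv (eq_of_length_eq_zero h0)
    exact hpq (eq_of_length_eq_one (by omega) (by omega))

end SimpleGraph.Walk

def IsCycleSupport (G : SimpleGraph V) (S : Finset V) : Prop :=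
  ∃ (x : V) (c : G.Walk x x), c.IsCycle ∧ ∀ y, y ∈ c.support ↔ y ∈ S

def MeetInDegreeTwo (G : SimpleGraph V) (S S' : Finset V) : Prop :=
  ∀ a ∈ S, a ∈ S' → degN G a = 2

/-- `e 0` and `e 1` play the role of the two ends of a banana. -/
def IsBananaSet (G : SimpleGraph V) (S : Finset V) : Prop :=
  IsCycleSupport G S ∧ ∃ e : Fin 2 → V, (∀ i, e i ∈ S) ∧ ∀ y ∈ S, degN G y ≠ 2 → ∃ i, e i = y

lemma MeetInDegreeTwo.symm {S S' : Finset V} (h : MeetInDegreeTwo G S S') :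
    MeetInDegreeTwo G S' S :=
  fun a ha ha' => h a ha' ha

instance : Std.Symm (MeetInDegreeTwo G) := ⟨fun _ _ h => h.symm⟩

lemma injective_of_pairwise_meetInDegreeTwo {ι : Type*} {S : ι → Finset V}
    (hS : Pairwise (MeetInDegreeTwo G on S)) {x : ι → V} (hx : ∀ i, x i ∈ S i)
    (hdeg : ∀ i, degN G (x i) ≠ 2) : x.Injective := fun i j hij => by
  by_contra hne
  exact hdeg i (hS hne _ (hx i) (hij ▸ hx j))

namespace IsCycleSupport

variable {S S' : Finset V}

lemma mem_of_adj (hS : IsCycleSupport G S) {x y : V} (hx : x ∈ S) (hdeg : degN G x = 2)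
    (hxy : G.Adj x y) : y ∈ S := by
  obtain ⟨_, c, hc, hcS⟩ := hS
  rw [← hcS] at hx ⊢
  exact hc.mem_support_of_adj hx hdeg hxy

lemma subset_of_meetInDegreeTwo (hS : IsCycleSupport G S) (hS' : IsCycleSupport G S') {z : V}
    (hz : z ∈ S) (hz' : z ∈ S') (hmeet : MeetInDegreeTwo G S S') : S ⊆ S' := by
  classical
  obtain ⟨_, c, -, hcS⟩ := hS
  rw [← hcS] at hz
  intro x hx
  rw [← hcS] at hx
  exact (c.rotate z hz).support_subset_of_closed (T := ↑S')
    (fun y hy hdeg w hw => hS'.mem_of_adj hy hdeg hw) hz'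
    (fun y hy hyS' => hmeet y ((hcS y).1 ((c.mem_support_rotate_iff z hz).1 hy)) hyS') x
    ((c.mem_support_rotate_iff z hz).2 hx)

lemma forall_ne_and_not_adj (hS : IsCycleSupport G S) (hS' : IsCycleSupport G S')
    (hne : S ≠ S') (hmeet : MeetInDegreeTwo G S S')
    (hcore : ∀ x ∈ S, ∀ y ∈ S', degN G x ≠ 2 → degN G y ≠ 2 → ¬ G.Adj x y) :
    ∀ x ∈ S, ∀ y ∈ S', x ≠ y ∧ ¬ G.Adj x y := by
  have hdisj : ∀ z ∈ S, z ∉ S' := fun z hz hz' =>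
    hne ((hS.subset_of_meetInDegreeTwo hS' hz hz' hmeet).antisymm
      (hS'.subset_of_meetInDegreeTwo hS hz' hz hmeet.symm))
  intro x hx y hy
  refine ⟨fun h => hdisj x hx (h ▸ hy), fun hxy => ?_⟩
  by_cases hx2 : degN G x = 2
  · exact hdisj y (hS.mem_of_adj hx hx2 hxy) hy
  by_cases hy2 : degN G y = 2
  · exact hdisj x hx (hS'.mem_of_adj hy hy2 hxy.symm)
  exact hcore x hx y hy hx2 hy2 hxy

end IsCycleSupport

lemma hasIndepCycles_of_pairwise_meetInDegreeTwo {k : ℕ} (S : Fin k → Finset V)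
    (hS : ∀ i, IsCycleSupport G (S i)) (hinj : S.Injective)
    (hsep : Pairwise (MeetInDegreeTwo G on S))
    (hcore : Pairwise fun i j =>
      ∀ x ∈ S i, ∀ y ∈ S j, degN G x ≠ 2 → degN G y ≠ 2 → ¬ G.Adj x y) :
    HasIndepCycles G k := by
  have hind {i j} (hij : i ≠ j) : ∀ x ∈ S i, ∀ y ∈ S j, x ≠ y ∧ ¬ G.Adj x y :=
    (hS i).forall_ne_and_not_adj (hS j) (hinj.ne hij) (hsep hij) (hcore hij)
  choose b c hc hcS using hS
  exact ⟨b, c, hc, fun i j hij x hx y hy => hind hij x ((hcS i x).1 hx) y ((hcS j y).1 hy)⟩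

lemma containsKst_of_adj {s t : ℕ} (a : Fin s → V) (b : Fin t → V) (ha : a.Injective)
    (hb : b.Injective) (hadj : ∀ i j, G.Adj (a i) (b j)) : ContainsKst G s t := by
  refine ⟨univ.map ⟨a, ha⟩, univ.map ⟨b, hb⟩, disjoint_left.mpr ?_, by simp, by simp,
    by simpa using hadj⟩
  simp only [mem_map, mem_univ, true_and, Function.Embedding.coeFn_mk, not_exists]
  rintro _ ⟨i, rfl⟩ j hj
  exact (hadj i j).ne hj.symm

theorem exists_card_lt_of_pairwise_meetInDegreeTwo (t k : ℕ) :
    ∃ R, ∀ {V : Type} (G : SimpleGraph V), OkFree G k → ¬ ContainsKst G t t →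
      ∀ F : Finset (Finset V), (∀ S ∈ F, IsBananaSet G S) →
        (F : Set (Finset V)).Pairwise (MeetInDegreeTwo G) → #F < R := by
  obtain ⟨R, hR⟩ := exists_monochromatic_orderEmbedding (Set (Fin 2 × Fin 2)) (k + (t + t))
  refine ⟨R, fun {V} G hok hkst F hF hgood => ?_⟩
  by_contra! hRF
  set S : Fin #F → Finset V := fun i => F.equivFin.symm i
  have hSF (i) : S i ∈ F := (F.equivFin.symm i).2
  have hSinj : S.Injective := Subtype.val_injective.comp F.equivFin.symm.injective
  have hsep : Pairwise (MeetInDegreeTwo G on S) := fun i j hij =>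
    hgood (hSF i) (hSF j) (hSinj.ne hij)
  choose e heS hecore using fun i => (hF _ (hSF i)).2
  obtain ⟨g, c, hc⟩ := hR _ hRF fun i j =>
    {p | degN G (e i p.1) ≠ 2 ∧ degN G (e j p.2) ≠ 2 ∧ G.Adj (e i p.1) (e j p.2)}
  rcases c.eq_empty_or_nonempty with rfl | ⟨⟨s, s'⟩, hss'⟩
  · have hcore {i j} (hij : i ≠ j) : ∀ x ∈ S (g i), ∀ y ∈ S (g j),
        degN G x ≠ 2 → degN G y ≠ 2 → ¬ G.Adj x y := by
      intro x hx y hy hx2 hy2 hxy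
      obtain ⟨s, rfl⟩ := hecore _ x hx hx2
      obtain ⟨s', rfl⟩ := hecore _ y hy hy2
      rcases hij.lt_or_gt with hlt | hgt
      · exact Set.eq_empty_iff_forall_notMem.mp (hc i j hlt) (s, s') ⟨hx2, hy2, hxy⟩
      · exact Set.eq_empty_iff_forall_notMem.mp (hc j i hgt) (s', s) ⟨hy2, hx2, hxy.symm⟩
    have hinj : (fun i => g (Fin.castAdd (t + t) i)).Injective :=
      g.injective.comp (Fin.castAdd_injective _ _)
    exact hok (hasIndepCycles_of_pairwise_meetInDegreeTwo _ (fun i => (hF _ (hSF _)).1)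
      (hSinj.comp hinj) (hsep.comp_of_injective hinj)
      fun i j hij => hcore ((Fin.castAdd_injective _ _).ne hij))
  · set P : Fin t → Fin (k + (t + t)) := fun i => Fin.natAdd k (Fin.castAdd t i)
    set Q : Fin t → Fin (k + (t + t)) := fun j => Fin.natAdd k (Fin.natAdd t j)
    have hPQ (i j : Fin t) : P i < Q j := by simp [P, Q, Fin.lt_def]; omega
    have hcol (i j : Fin t) : degN G (e (g (P i)) s) ≠ 2 ∧ degN G (e (g (Q j)) s') ≠ 2 ∧
        G.Adj (e (g (P i)) s) (e (g (Q j)) s') := by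
      rw [← hc _ _ (hPQ i j)] at hss'
      exact hss'
    have hsepP : Pairwise (MeetInDegreeTwo G on fun i => S (g (P i))) :=
      hsep.comp_of_injective (g.injective.comp fun i j h => by simpa [P] using h)
    have hsepQ : Pairwise (MeetInDegreeTwo G on fun j => S (g (Q j))) :=
      hsep.comp_of_injective (g.injective.comp fun i j h => by simpa [Q] using h)
    exact hkst (containsKst_of_adj _ _
      (injective_of_pairwise_meetInDegreeTwo hsepP (fun i => heS _ s) fun i => (hcol i i).1)
      (injective_of_pairwise_meetInDegreeTwo hsepQ (fun j => heS _ s') fun j => (hcol j j).2.1)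
      fun i j => (hcol i j).2.2)

theorem exists_hittingSet_of_card_le [Fintype V] {R : ℕ}
    (hR : ∀ F : Finset (Finset V), (∀ S ∈ F, IsBananaSet G S) →
      (F : Set (Finset V)).Pairwise (MeetInDegreeTwo G) → #F ≤ R) :
    ∃ X : Finset V, #X ≤ 2 * R ∧ ∀ S, IsBananaSet G S → ∃ x ∈ X, x ∈ S := by
  classical
  obtain ⟨F, hF, hFmax⟩ := exists_max_image
    {F : Finset (Finset V) | (∀ S ∈ F, IsBananaSet G S) ∧
      (F : Set (Finset V)).Pairwise (MeetInDegreeTwo G)} card ⟨∅, by simp⟩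
  simp only [mem_filter, mem_univ, true_and] at hF hFmax
  choose e heS hecore using fun S (hS : S ∈ F) => (hF.1 S hS).2
  have hmemX {S} (hS : S ∈ F) (i) : e S hS i ∈ F.attach.biUnion fun S => univ.image (e S.1 S.2) :=
    mem_biUnion.mpr ⟨⟨S, hS⟩, mem_attach _ _, mem_image_of_mem _ (mem_univ _)⟩
  refine ⟨F.attach.biUnion fun S => univ.image (e S.1 S.2), ?_, fun S hS => ?_⟩
  · calc #(F.attach.biUnion fun S => univ.image (e S.1 S.2))
        ≤ #F.attach * 2 := card_biUnion_le_card_mul _ _ _ fun S _ =>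
          card_image_le.trans (by simp)
      _ ≤ 2 * R := by rw [card_attach, mul_comm]; exact Nat.mul_le_mul_left 2 (hR F hF.1 hF.2)
  by_cases hSF : S ∈ F
  · exact ⟨_, hmemX hSF 0, heS S hSF 0⟩
  have hbad : ¬ (insert S (F : Set (Finset V))).Pairwise (MeetInDegreeTwo G) := fun hgood => by
    have := hFmax (insert S F) ⟨fun S' hS' => (mem_insert.mp hS').elim (· ▸ hS) (hF.1 S'),
      by simpa using hgood⟩
    rw [card_insert_of_notMem hSF] at this
    omega
  simp only [Set.pairwise_insert_of_symm, hF.2, true_and, MeetInDegreeTwo, not_forall] at hbad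
  obtain ⟨S', hS', -, a, haS, haS', ha2⟩ := hbad
  obtain ⟨i, rfl⟩ := hecore S' hS' a haS' ha2
  exact ⟨_, hmemX hS' i, haS⟩

lemma isBananaSet_of_banana [DecidableEq V] {u v : V} (huv : u ≠ v) {p q : G.Walk u v}
    (hp : p.IsPath) (hq : q.IsPath) (hpq : p ≠ q)
    (hint : ∀ x ∈ p.support, x ∈ q.support → x = u ∨ x = v)
    (hdp : ∀ x ∈ p.support, x ≠ u → x ≠ v → degN G x = 2)
    (hdq : ∀ x ∈ q.support, x ≠ u → x ≠ v → degN G x = 2) :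
    IsBananaSet G (p.support.toFinset ∪ q.support.toFinset) := by
  refine ⟨⟨u, _, hp.isCycle_append_reverse hq huv hpq hint, fun y => by simp⟩,
    ![u, v], fun i => by fin_cases i <;> simp, fun y hy hy2 => ?_⟩
  by_contra! hne
  have hu : y ≠ u := fun h => hne 0 (by simp [h])
  have hv : y ≠ v := fun h => hne 1 (by simp [h])
  simp only [mem_union, List.mem_toFinset] at hy
  exact hy2 (hy.elim (hdp y · hu hv) (hdq y · hu hv))

/-- There is a function `f' : ℕ × ℕ → ℕ` such that for all `t ≥ 2`,
`k ≥ 1`, every `O_k`-free graph with no `K_{t,t}` subgraph has a set `X` of at most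
`f' (t, k)` vertices meeting every banana of `G` (a banana is a pair of distinct
vertices joined by two internally disjoint paths all of whose internal vertices have
degree 2 in `G`). -/
theorem stmt5 :
    ∃ f' : ℕ × ℕ → ℕ,
      ∀ (t k : ℕ), 2 ≤ t → 1 ≤ k →
        ∀ (V : Type) [Fintype V] (G : SimpleGraph V),
          OkFree G k → ¬ ContainsKst G t t →
          ∃ X : Finset V, X.card ≤ f' (t, k) ∧
            ∀ (u v : V), u ≠ v →
              ∀ (p q : G.Walk u v), p.IsPath → q.IsPath → p ≠ q →
                (∀ x ∈ p.support, x ∈ q.support → x = u ∨ x = v) →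
                (∀ x ∈ p.support, x ≠ u → x ≠ v → degN G x = 2) →
                (∀ x ∈ q.support, x ≠ u → x ≠ v → degN G x = 2) →
                ∃ x ∈ X, x ∈ p.support ∨ x ∈ q.support := by
  classical
  choose R hR using exists_card_lt_of_pairwise_meetInDegreeTwo
  refine ⟨fun tk => 2 * R tk.1 tk.2, fun t k _ _ V _ G hok hkst => ?_⟩
  obtain ⟨X, hXcard, hX⟩ :=
    exists_hittingSet_of_card_le fun F hF hgood => (hR t k G hok hkst F hF hgood).le
  refine ⟨X, hXcard, fun u v huv p q hp hq hpq hint hdp hdq => ?_⟩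
  obtain ⟨x, hxX, hx⟩ := hX _ (isBananaSet_of_banana huv hp hq hpq hint hdp hdq)
  exact ⟨x, hxX, by simpa using hx⟩
end

section
/- For every integer k ≥ 1, every O_k-free graph G of girth at least 11 with at least one vertex has average degree at most 2k, i.e., |E(G)| ≤ k · |V(G)|. -/
open SimpleGraph

/-!
If every nonempty vertex set `S` contains a vertex with at most `k` neighbours in `S`, deleting
such vertices one at a time shows `|E| ≤ k |V|`. Otherwise some `S` has minimum degree at least
`k + 1`; let `C` be a shortest cycle in `S`. As `C` has length at least 9, any short detour between
vertices of `C` together with the shorter arc of `C` would give a shorter cycle in `S`. Hence `C`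
has no chord, no vertex off `C` sees two vertices of `C`, and no vertex at distance two from `C`
has two neighbours adjacent to `C`. So the vertices of `S` at distance at least two from `C` form
a nonempty set of minimum degree at least `k`, which by induction carries `k - 1` pairwise
independent cycles, all independent of `C`.
-/

open Finset

namespace SimpleGraph

variable {V : Type} {G : SimpleGraph V}

namespace Walk

lemma exists_walk_two_mul_length_le {a u v : V} (c : G.Walk a a) (hu : u ∈ c.support)
    (hv : v ∈ c.support) :
    ∃ p : G.Walk u v, p.support ⊆ c.support ∧ p.edges ⊆ c.edges ∧ 2 * p.length ≤ c.length := by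
  classical
  set r := c.rotate u hu
  have hvr : v ∈ r.support := (mem_support_rotate_iff c u hu).mpr hv
  have hsupp : r.support ⊆ c.support := fun x hx => (mem_support_rotate_iff c u hu).mp hx
  have hedges : r.edges ⊆ c.edges := fun e he => ((rotate_edges c u hu).perm.mem_iff).mp he
  have hlen : (r.takeUntil v hvr).length + (r.dropUntil v hvr).length = c.length := by
    rw [← length_append, take_spec, length_rotate]
  by_cases hshort : 2 * (r.takeUntil v hvr).length ≤ c.length
  · exact ⟨r.takeUntil v hvr, List.Subset.trans (r.support_takeUntil_subset_support hvr) hsupp,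
      List.Subset.trans (r.edges_takeUntil_subset_edges hvr) hedges, hshort⟩
  · refine ⟨(r.dropUntil v hvr).reverse, ?_, ?_, ?_⟩
    · rw [support_reverse]
      exact fun x hx => hsupp (r.support_dropUntil_subset_support hvr (List.mem_reverse.mp hx))
    · rw [edges_reverse]
      exact fun e he => hedges (r.edges_dropUntil_subset_edges hvr (List.mem_reverse.mp he))
    · rw [length_reverse]
      omega

lemma exists_isCycle_of_adj {x y : V} (h : G.Adj x y) (q : G.Walk x y)
    (hq : s(x, y) ∉ q.edges) :
    ∃ d : G.Walk y y, d.IsCycle ∧ d.length ≤ q.length + 1 ∧ d.support ⊆ q.support := by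
  classical
  refine ⟨cons h.symm q.bypass, ?_, ?_, ?_⟩
  · rw [cons_isCycle_iff, Sym2.eq_swap]
    exact ⟨q.bypass_isPath, fun he => hq (q.edges_bypass_subset_edges he)⟩
  · simpa using q.length_bypass_le_length
  · rw [support_cons, List.cons_subset]
    exact ⟨q.end_mem_support, q.support_bypass_subset_support⟩

end Walk

lemma exists_isPath_forall_adj_mem_support {S : Finset V} (hS : S.Nonempty) :
    ∃ (u z : V) (p : G.Walk u z), p.IsPath ∧ (∀ x ∈ p.support, x ∈ S) ∧
      ∀ y ∈ S, G.Adj u y → y ∈ p.support := by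
  classical
  set L : Set ℕ := {n | ∃ (u z : V) (p : G.Walk u z),
    p.IsPath ∧ (∀ x ∈ p.support, x ∈ S) ∧ p.length = n}
  have hL : L.Nonempty := by
    obtain ⟨v, hv⟩ := hS
    exact ⟨0, v, v, .nil, by simp, by simpa using hv, rfl⟩
  have hLbdd : BddAbove L := by
    refine ⟨#S, ?_⟩
    rintro _ ⟨u, z, p, hp, hpS, rfl⟩
    calc p.length ≤ p.support.length := by simp
      _ = #p.support.toFinset := (List.toFinset_card_of_nodup hp.support_nodup).symm
      _ ≤ #S := card_le_card fun x hx => hpS x (List.mem_toFinset.mp hx)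
  obtain ⟨u, z, p, hp, hpS, hplen⟩ := Nat.sSup_mem hL hLbdd
  refine ⟨u, z, p, hp, hpS, fun y hy huy => ?_⟩
  by_contra hyp
  have hlonger : p.length + 1 ∈ L :=
    ⟨y, z, .cons huy.symm p, hp.cons hyp, by simpa [hy] using hpS, by simp⟩
  have := le_csSup hLbdd hlonger
  omega

theorem exists_isCycle_of_two_le_degree [DecidableRel G.Adj] {S : Finset V} (hS : S.Nonempty)
    (hdeg : ∀ v ∈ S, 2 ≤ #{u ∈ S | G.Adj v u}) :
    ∃ (a : V) (c : G.Walk a a), c.IsCycle ∧ ∀ x ∈ c.support, x ∈ S := by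
  classical
  obtain ⟨u, z, p, hp, hpS, hnbr⟩ := exists_isPath_forall_adj_mem_support (G := G) hS
  obtain ⟨y₁, hy₁, y₂, hy₂, hy₁₂⟩ := one_lt_card.mp (hdeg u (hpS u p.start_mem_support))
  simp only [mem_filter] at hy₁ hy₂
  cases p with
  | nil => exact (hy₁.2.ne' (by simpa using hnbr y₁ hy₁.1 hy₁.2)).elim
  | @cons _ w _ huw p =>
    obtain ⟨y, ⟨hyS, huy⟩, hyw⟩ : ∃ y, (y ∈ S ∧ G.Adj u y) ∧ y ≠ w := by
      by_cases h : y₁ = w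
      · exact ⟨y₂, hy₂, fun h' => hy₁₂ (h.trans h'.symm)⟩
      · exact ⟨y₁, hy₁, h⟩
    have hyp : y ∈ p.support := by
      simpa [huy.ne'] using hnbr y hyS huy
    have hup : u ∉ p.support := (Walk.cons_isPath_iff huw p).mp hp |>.2
    obtain ⟨d, hd, -, hdsupp⟩ := Walk.exists_isCycle_of_adj huy (.cons huw (p.takeUntil y hyp)) (by
      rw [Walk.edges_cons, List.mem_cons, not_or]
      refine ⟨fun h => hyw (Sym2.congr_right.mp h), fun h => hup ?_⟩
      exact p.fst_mem_support_of_mem_edges (p.edges_takeUntil_subset_edges hyp h))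
    refine ⟨y, d, hd, fun x hx => hpS x ?_⟩
    have hx := hdsupp hx
    rw [Walk.support_cons, List.mem_cons] at hx ⊢
    exact hx.imp_right fun h => p.support_takeUntil_subset_support hyp h

namespace Walk

structure IsShortestCycleIn (S : Set V) {a : V} (c : G.Walk a a) : Prop where
  isCycle : c.IsCycle
  support_subset : ∀ x ∈ c.support, x ∈ S
  length_le : ∀ ⦃b : V⦄ (d : G.Walk b b), d.IsCycle → (∀ x ∈ d.support, x ∈ S) →
    c.length ≤ d.length

lemma exists_isShortestCycleIn {S : Set V}
    (h : ∃ (a : V) (c : G.Walk a a), c.IsCycle ∧ ∀ x ∈ c.support, x ∈ S) :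
    ∃ (a : V) (c : G.Walk a a), c.IsShortestCycleIn S := by
  classical
  have hex : ∃ n, ∃ (a : V) (c : G.Walk a a),
      (c.IsCycle ∧ ∀ x ∈ c.support, x ∈ S) ∧ c.length = n := by
    obtain ⟨a, c, hc⟩ := h
    exact ⟨_, a, c, hc, rfl⟩
  obtain ⟨a, c, ⟨hc, hcS⟩, hlen⟩ := Nat.find_spec hex
  exact ⟨a, c, hc, hcS, fun b d hd hdS => hlen ▸ Nat.find_min' hex ⟨b, d, ⟨hd, hdS⟩, rfl⟩⟩

namespace IsShortestCycleIn

variable {S : Set V} {a : V} {c : G.Walk a a}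

/-- The edge `xy`, the walk `p`, the shorter arc of `c` from `c₂` to `c₁` and the walk `r` close
up a cycle in `S`, which cannot be shorter than `c`. -/
lemma length_le_of_adj (hc : c.IsShortestCycleIn S) {x y c₁ c₂ : V} (h : G.Adj x y)
    (hxy : s(x, y) ∉ c.edges) (hc₁ : c₁ ∈ c.support) (hc₂ : c₂ ∈ c.support)
    (p : G.Walk x c₂) (r : G.Walk c₁ y) (hpS : ∀ z ∈ p.support, z ∈ S)
    (hrS : ∀ z ∈ r.support, z ∈ S) (hp : s(x, y) ∉ p.edges) (hr : s(x, y) ∉ r.edges) :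
    c.length ≤ 2 * (p.length + r.length + 1) := by
  obtain ⟨q, hqsupp, hqedges, hqlen⟩ := c.exists_walk_two_mul_length_le hc₂ hc₁
  obtain ⟨d, hd, hdlen, hdsupp⟩ := exists_isCycle_of_adj h (p.append (q.append r)) (by
    simp only [edges_append, List.mem_append, not_or]
    exact ⟨hp, fun he => hxy (hqedges he), hr⟩)
  have hdS : ∀ z ∈ d.support, z ∈ S := by
    intro z hz
    have hz := hdsupp hz
    simp only [mem_support_append_iff] at hz
    rcases hz with hz | hz | hz
    exacts [hpS z hz, hc.support_subset z (hqsupp hz), hrS z hz]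
  have := hc.length_le d hd hdS
  simp only [length_append] at hdlen
  omega

lemma mem_edges_of_adj (hc : c.IsShortestCycleIn S) {x y : V} (hx : x ∈ c.support)
    (hy : y ∈ c.support) (h : G.Adj x y) : s(x, y) ∈ c.edges := by
  by_contra hxy
  have hle := hc.length_le_of_adj h hxy hy hx nil nil (by simpa using hc.support_subset x hx)
    (by simpa using hc.support_subset y hy) (by simp) (by simp)
  have h3 := hc.isCycle.three_le_length
  simp only [length_nil] at hle
  omega

lemma eq_of_adj_of_adj (hc : c.IsShortestCycleIn S) (hlen : 5 ≤ c.length) {x c₁ c₂ : V}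
    (hx : x ∈ S) (hxc : x ∉ c.support) (hc₁ : c₁ ∈ c.support) (hc₂ : c₂ ∈ c.support)
    (h₁ : G.Adj x c₁) (h₂ : G.Adj x c₂) : c₁ = c₂ := by
  by_contra hne
  have := hc.length_le_of_adj h₁ (fun he => hxc (c.fst_mem_support_of_mem_edges he)) hc₁ hc₂
    (cons h₂ nil) nil (by simpa [hx] using hc.support_subset c₂ hc₂)
    (by simpa using hc.support_subset c₁ hc₁) (by simp [hne, h₁.ne']) (by simp)
  simp only [length_cons, length_nil] at this
  omega

lemma not_adj_of_adj_of_adj (hc : c.IsShortestCycleIn S) (hlen : 7 ≤ c.length)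
    {x u y z : V} (hx : x ∈ c.support) (hu : u ∈ S) (hy : y ∈ S) (huc : u ∉ c.support)
    (hyc : y ∉ c.support) (hz : z ∈ c.support) (hxu : G.Adj x u) (huy : G.Adj u y) :
    ¬ G.Adj y z := by
  intro hyz
  have hxy : x ≠ y := fun h => hyc (h ▸ hx)
  have huz : u ≠ z := fun h => huc (h ▸ hz)
  have := hc.length_le_of_adj hxu.symm (fun he => huc (c.fst_mem_support_of_mem_edges he)) hx hz
    (cons huy (cons hyz nil)) nil (by simpa [hu, hy] using hc.support_subset z hz)
    (by simpa using hc.support_subset x hx) (by simp [hxy, huy.ne, huz]) (by simp)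
  simp only [length_cons, length_nil] at this
  omega

lemma eq_of_adj_of_adj_of_adj (hc : c.IsShortestCycleIn S) (hlen : 9 ≤ c.length)
    {v u₁ u₂ c₁ c₂ : V} (hv : v ∈ S) (hvc : ∀ z ∈ c.support, z ≠ v ∧ ¬ G.Adj z v)
    (hu₁ : u₁ ∈ S) (hu₂ : u₂ ∈ S) (hc₁ : c₁ ∈ c.support) (hc₂ : c₂ ∈ c.support)
    (h₁ : G.Adj v u₁) (h₂ : G.Adj v u₂) (h₁' : G.Adj u₁ c₁) (h₂' : G.Adj u₂ c₂) : u₁ = u₂ := by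
  by_contra hne
  have hvc₁ := (hvc c₁ hc₁).1
  have hvc₂ := (hvc c₂ hc₂).1
  have := hc.length_le_of_adj h₁ (fun he => (hvc v (c.fst_mem_support_of_mem_edges he)).1 rfl)
    hc₁ hc₂ (cons h₂ (cons h₂' nil)) (cons h₁'.symm nil)
    (by simpa [hv, hu₂] using hc.support_subset c₂ hc₂)
    (by simpa [hu₁] using hc.support_subset c₁ hc₁)
    (by simp [hne, h₂.ne, hvc₂.symm]) (by simp [h₁.ne, hvc₁.symm])
  simp only [length_cons, length_nil] at this
  omega

end IsShortestCycleIn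

variable [DecidableEq V] [DecidableRel G.Adj]

def exterior {a : V} (c : G.Walk a a) (S : Finset V) : Finset V :=
  {x ∈ S | ∀ z ∈ c.support, z ≠ x ∧ ¬ G.Adj z x}

lemma mem_exterior {a x : V} {c : G.Walk a a} {S : Finset V} :
    x ∈ c.exterior S ↔ x ∈ S ∧ ∀ z ∈ c.support, z ≠ x ∧ ¬ G.Adj z x :=
  mem_filter

lemma exterior_subset {a : V} (c : G.Walk a a) (S : Finset V) : c.exterior S ⊆ S :=
  filter_subset _ _

namespace IsShortestCycleIn

variable {S : Finset V} {a : V} {c : G.Walk a a}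

lemma exterior_nonempty (hc : c.IsShortestCycleIn S) (hlen : 7 ≤ c.length)
    (hdeg : ∀ v ∈ S, 3 ≤ #{u ∈ S | G.Adj v u}) : (c.exterior S).Nonempty := by
  have ha : a ∈ c.support := c.start_mem_support
  have haS : a ∈ S := hc.support_subset a ha
  -- `c` has no chords, so at most two neighbours of `a` lie on `c`
  obtain ⟨u, ⟨huS, hau⟩, huc⟩ : ∃ u, (u ∈ S ∧ G.Adj a u) ∧ u ∉ c.support := by
    by_contra! h
    have hsub : (↑{u ∈ S | G.Adj a u} : Set V) ⊆ c.toSubgraph.neighborSet a := fun u hu => by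
      rw [coe_filter, Set.mem_ofPred_eq] at hu
      exact adj_toSubgraph_iff_mem_edges.mpr (hc.mem_edges_of_adj ha (h u hu) hu.2)
    have h2 := hc.isCycle.ncard_neighborSet_toSubgraph_eq_two ha
    have := Set.ncard_le_ncard hsub (Set.finite_of_ncard_pos (by omega))
    rw [Set.ncard_coe_finset, h2] at this
    have := hdeg a haS
    omega
  obtain ⟨y, hy, hya⟩ := exists_mem_ne (s := {w ∈ S | G.Adj u w}) (by have := hdeg u huS; omega) a
  rw [mem_filter] at hy
  have hyc : y ∉ c.support := fun hyc =>
    hya (hc.eq_of_adj_of_adj (by omega) huS huc hyc ha hy.2 hau.symm)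
  refine ⟨y, mem_exterior.mpr ⟨hy.1, fun z hz => ⟨fun h => hyc (h ▸ hz), fun h => ?_⟩⟩⟩
  exact hc.not_adj_of_adj_of_adj hlen ha huS hy.1 huc hyc hz hau hy.2 h.symm

lemma le_card_filter_adj_exterior (hc : c.IsShortestCycleIn S) (hlen : 9 ≤ c.length) {k : ℕ}
    (hdeg : ∀ v ∈ S, k + 1 ≤ #{u ∈ S | G.Adj v u}) :
    ∀ v ∈ c.exterior S, k ≤ #{u ∈ c.exterior S | G.Adj v u} := by
  intro v hv
  obtain ⟨hvS, hvc⟩ := mem_exterior.mp hv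
  set A := {u ∈ S | G.Adj v u}
  set B := {u ∈ c.exterior S | G.Adj v u}
  have hAB : ∀ u ∈ A \ B, u ∈ S ∧ G.Adj v u ∧ ∃ z ∈ c.support, G.Adj u z := by
    intro u hu
    simp only [A, B, exterior, mem_sdiff, mem_filter, not_and] at hu
    obtain ⟨⟨huS, hvu⟩, hu⟩ := hu
    refine ⟨huS, hvu, ?_⟩
    by_contra! h
    refine hu ⟨huS, fun z hz => ⟨?_, fun hzu => h z hz hzu.symm⟩⟩ hvu
    rintro rfl
    exact (hvc z hz).2 hvu.symm
  have hlost : #(A \ B) ≤ 1 := by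
    refine card_le_one.mpr fun u₁ h₁ u₂ h₂ => ?_
    obtain ⟨hu₁, hvu₁, c₁, hc₁, h₁'⟩ := hAB u₁ h₁
    obtain ⟨hu₂, hvu₂, c₂, hc₂, h₂'⟩ := hAB u₂ h₂
    exact hc.eq_of_adj_of_adj_of_adj hlen hvS hvc hu₁ hu₂ hc₁ hc₂ hvu₁ hvu₂ h₁' h₂'
  have hA : k + 1 ≤ #A := hdeg v hvS
  have := card_le_card_sdiff_add_card (s := A) (t := B)
  omega

end IsShortestCycleIn

end Walk

def IndepCyclesIn (G : SimpleGraph V) (S : Set V) (L : List ((v : V) × G.Walk v v)) : Prop :=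
  (∀ p ∈ L, p.2.IsCycle ∧ ∀ x ∈ p.2.support, x ∈ S) ∧
    L.Pairwise fun p q => ∀ x ∈ p.2.support, ∀ y ∈ q.2.support, x ≠ y ∧ ¬ G.Adj x y

lemma IndepCyclesIn.hasIndepCycles {S : Set V} {L : List ((v : V) × G.Walk v v)}
    (hL : G.IndepCyclesIn S L) : HasIndepCycles G L.length := by
  obtain ⟨hcyc, hpair⟩ := hL
  refine ⟨fun i => L[i].1, fun i => L[i].2, fun i => (hcyc _ (L.getElem_mem i.2)).1, ?_⟩
  intro i j hij x hx y hy
  rw [List.pairwise_iff_getElem] at hpair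
  rcases lt_or_gt_of_ne hij with h | h
  · exact hpair i j i.2 j.2 h x hx y hy
  · obtain ⟨hyx, hadj⟩ := hpair j i j.2 i.2 h y hy x hx
    exact ⟨hyx.symm, fun h => hadj h.symm⟩

theorem exists_indepCyclesIn_of_le_degree [DecidableEq V] [DecidableRel G.Adj]
    (hg : GirthAtLeast G 9) :
    ∀ (k : ℕ) (S : Finset V), S.Nonempty → (∀ v ∈ S, k + 1 ≤ #{u ∈ S | G.Adj v u}) →
      ∃ L, L.length = k ∧ G.IndepCyclesIn S L
  | 0, _, _, _ => ⟨[], rfl, by simp [IndepCyclesIn]⟩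
  | k + 1, S, hS, hdeg => by
    obtain ⟨a, c, hc⟩ := Walk.exists_isShortestCycleIn
      (exists_isCycle_of_two_le_degree (G := G) hS fun v hv => by have := hdeg v hv; omega)
    have hlen : 9 ≤ c.length := hg a c hc.isCycle
    obtain ⟨L, hL, hLcyc, hLpair⟩ : ∃ L, L.length = k ∧ G.IndepCyclesIn (c.exterior S) L := by
      cases k with
      | zero => exact ⟨[], rfl, by simp [IndepCyclesIn]⟩
      | succ k =>
        exact exists_indepCyclesIn_of_le_degree hg (k + 1) _
          (hc.exterior_nonempty (by omega) fun v hv => by have := hdeg v hv; omega)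
          (hc.le_card_filter_adj_exterior hlen hdeg)
    refine ⟨⟨a, c⟩ :: L, by simp [hL], ?_, ?_⟩
    · simp only [List.mem_cons, forall_eq_or_imp]
      exact ⟨⟨hc.isCycle, hc.support_subset⟩, fun p hp =>
        ⟨(hLcyc p hp).1, fun x hx => c.exterior_subset S ((hLcyc p hp).2 x hx)⟩⟩
    · refine List.Pairwise.cons (fun q hq x hx y hy => ?_) hLpair
      exact (Walk.mem_exterior.mp ((hLcyc q hq).2 y hy)).2 x hx

theorem card_edgeFinset_inter_sym2_le [Fintype V] [DecidableEq V] [DecidableRel G.Adj] {k : ℕ}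
    (h : ∀ S : Finset V, S.Nonempty → ∃ v ∈ S, #{u ∈ S | G.Adj v u} ≤ k) (S : Finset V) :
    #(G.edgeFinset ∩ S.sym2) ≤ k * #S := by
  induction S using Finset.strongInduction with
  | H S ih =>
  rcases S.eq_empty_or_nonempty with rfl | hS
  · simp
  obtain ⟨v, hv, hvk⟩ := h S hS
  have hsub : G.edgeFinset ∩ S.sym2 ⊆
      G.edgeFinset ∩ (S.erase v).sym2 ∪ {u ∈ S | G.Adj v u}.image (s(v, ·)) := by
    intro e he
    rw [mem_inter, mem_edgeFinset, mem_sym2_iff] at he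
    rw [mem_union, mem_inter, mem_edgeFinset, mem_sym2_iff, mem_image]
    by_cases hve : v ∈ e
    · obtain ⟨u, rfl⟩ := Sym2.mem_iff_exists.mp hve
      exact .inr ⟨u, mem_filter.mpr ⟨he.2 u (Sym2.mem_mk_right _ _), he.1⟩, rfl⟩
    · exact .inl ⟨he.1, fun u hu => mem_erase.mpr ⟨fun h => hve (h ▸ hu), he.2 u hu⟩⟩
  calc #(G.edgeFinset ∩ S.sym2)
      ≤ #(G.edgeFinset ∩ (S.erase v).sym2) + #({u ∈ S | G.Adj v u}.image (s(v, ·))) :=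
        (card_le_card hsub).trans (card_union_le _ _)
    _ ≤ k * #(S.erase v) + k := add_le_add (ih _ (erase_ssubset hv)) (card_image_le.trans hvk)
    _ = k * #S := by
        rw [card_erase_of_mem hv, Nat.mul_sub_one, Nat.sub_add_cancel]
        exact Nat.le_mul_of_pos_right k (card_pos.mpr hS)

end SimpleGraph

theorem stmt6_general (k : ℕ) (V : Type) [Fintype V]
    (G : SimpleGraph V) (hfree : OkFree G k) (hgirth : GirthAtLeast G 11) :
    Nat.card G.edgeSet ≤ k * Fintype.card V := by
  classical
  have hdegenerate : ∀ S : Finset V, S.Nonempty → ∃ v ∈ S, #{u ∈ S | G.Adj v u} ≤ k := by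
    intro S hS
    by_contra! hdeg
    obtain ⟨L, rfl, hL⟩ := exists_indepCyclesIn_of_le_degree
      (fun v w hw => (by norm_num : 9 ≤ 11).trans (hgirth v w hw)) k S hS hdeg
    exact hfree hL.hasIndepCycles
  have hcount := card_edgeFinset_inter_sym2_le hdegenerate univ
  rw [sym2_univ, inter_univ, card_univ] at hcount
  rwa [Nat.card_eq_fintype_card, ← edgeFinset_card]

/-- For every `k ≥ 1`, every `O_k`-free graph of girth at least 11
with at least one vertex has average degree at most `2k`, i.e. `|E(G)| ≤ k * |V(G)|`. -/
theorem stmt6 (k : ℕ) (hk : 1 ≤ k) (V : Type) [Fintype V] [Nonempty V]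
    (G : SimpleGraph V) (hfree : OkFree G k) (hgirth : GirthAtLeast G 11) :
    Nat.card G.edgeSet ≤ k * Fintype.card V :=
  stmt6_general k V G hfree hgirth
end

section
/- There is a constant c > 0 such that for every integer k ≥ 2 the following holds: if G is a graph with at least one vertex and average degree at least c · k · log k, then every strict subdivision of G contains k pairwise independent cycles (equivalently, contains the disjoint union of k cycles as an induced subgraph). -/
open SimpleGraph

/-- `H` is a strict subdivision of `G`, witnessed by the vertex embedding `f` and, for
each edge of `G`, a path `p u v h` of `H` of length at least 2 joining the images of
its endpoints: the paths are internally disjoint from the branch vertices and from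
each other, and `H` has exactly the vertices and edges of these paths. -/
def IsStrictSubdivision {V W : Type} (G : SimpleGraph V) (H : SimpleGraph W)
    (f : V → W) (p : ∀ u v, G.Adj u v → H.Walk (f u) (f v)) : Prop :=
  Function.Injective f ∧
  (∀ u v (h : G.Adj u v), (p u v h).IsPath ∧ 2 ≤ (p u v h).length) ∧
  (∀ u v (h : G.Adj u v), p v u h.symm = (p u v h).reverse) ∧
  (∀ u v (h : G.Adj u v), ∀ x ∈ (p u v h).support,
      x ≠ f u → x ≠ f v → x ∉ Set.range f) ∧
  (∀ u v (h : G.Adj u v), ∀ u' v' (h' : G.Adj u' v'), s(u, v) ≠ s(u', v') →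
      ∀ x ∈ (p u v h).support, x ≠ f u → x ≠ f v →
        ∀ y ∈ (p u' v' h').support, y ≠ f u' → y ≠ f v' → x ≠ y) ∧
  (∀ x : W, x ∈ Set.range f ∨ ∃ u v, ∃ h : G.Adj u v, x ∈ (p u v h).support) ∧
  (∀ x y : W, H.Adj x y → ∃ u v, ∃ h : G.Adj u v, s(x, y) ∈ (p u v h).edges)

/-!
Only the factor `k` of the bound matters: as `12 log k > 8`, the graph `G` has average degree
above `8 k`, so deleting vertices of degree at most `4 k` one at a time (which keeps the degree
sum above `8 k` times the number of vertices) leaves a nonempty vertex set `B` of minimum degree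
above `4 k`. A shortest cycle `C` in `B` is chordless, and a vertex `v` outside `C` with two
neighbours on it splits `C` into arcs of lengths `l₁ + l₂ = |C|` with `|C| ≤ l₁ + 2` and
`|C| ≤ l₂ + 2`, so `|C| ≤ 4`. Either way every vertex has at most four neighbours on `C`, so
removing `C` leaves a nonempty set of minimum degree above `4 (k - 1)`, and induction gives `k`
vertex-disjoint cycles of `G`. Replacing each edge by its subdivision path turns them into cycles
of `H`, and these are independent: an edge of `H` between two of them would join the two branch
vertices of one subdivision path, which has length at least two.
-/

open Finset

lemma Pairwise.fin_cons {α : Type*} {r : α → α → Prop} (hr : ∀ x y, r x y → r y x)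
    {n : ℕ} {a : α} {f : Fin n → α} (ha : ∀ i, r a (f i))
    (hf : Pairwise fun i j ↦ r (f i) (f j)) :
    Pairwise fun i j ↦
      r ((Fin.cons a f : Fin (n + 1) → α) i) ((Fin.cons a f : Fin (n + 1) → α) j) := by
  intro i j hij
  cases i using Fin.cases <;> cases j using Fin.cases
  · exact absurd rfl hij
  · exact ha _
  · exact hr _ _ (ha _)
  · exact hf fun h ↦ hij (congrArg Fin.succ h)

namespace SimpleGraph

variable {V : Type*} {G : SimpleGraph V}

namespace Walk

variable {u v w : V}

lemma IsCycle.isPath_dropUntil [DecidableEq V] {c : G.Walk v v} (hc : c.IsCycle)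
    (h : w ∈ c.support) (hw : w ≠ v) : (c.dropUntil w h).IsPath := by
  rw [← take_spec c h] at hc
  exact hc.isPath_of_append_right (not_nil_of_ne hw.symm)

lemma IsCycle.exists_arcs [DecidableEq V] {c : G.Walk v v} (hc : c.IsCycle)
    (h : w ∈ c.support) (hw : w ≠ v) :
    ∃ q₁ q₂ : G.Walk v w, q₁.IsPath ∧ q₂.IsPath ∧ q₁.length + q₂.length = c.length ∧
      (∀ x ∈ q₁.support, x ∈ c.support) ∧ (∀ x ∈ q₂.support, x ∈ c.support) ∧
      c.getVert q₁.length = w := by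
  refine ⟨c.takeUntil w h, (c.dropUntil w h).reverse, hc.isPath_takeUntil h,
    (hc.isPath_dropUntil h hw).reverse, ?_, fun x hx ↦ c.support_takeUntil_subset_support h hx,
    fun x hx ↦ c.support_dropUntil_subset_support h (by simpa using hx), getVert_length_takeUntil h⟩
  rw [length_reverse, ← length_append, take_spec]

lemma card_support_toFinset_le_length_s9 [DecidableEq V] {c : G.Walk v v} (hc : ¬ c.Nil) :
    #c.support.toFinset ≤ c.length := by
  rw [← c.cons_tail_support, List.toFinset_cons,
    insert_eq_of_mem (List.mem_toFinset.2 (end_mem_tail_support hc))]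
  exact (List.toFinset_card_le _).trans (by simp)

lemma IsPath.append {u v w : V} {p : G.Walk u v} {q : G.Walk v w} (hp : p.IsPath)
    (hq : q.IsPath) (h : p.support.Disjoint q.support.tail) : (p.append q).IsPath := by
  rw [isPath_def, support_append, List.nodup_append']
  exact ⟨hp.support_nodup, hq.support_nodup.sublist (List.tail_sublist _), h⟩

lemma IsPath.start_notMem_support_tail {u v : V} {p : G.Walk u v} (hp : p.IsPath) :
    u ∉ p.support.tail :=
  (List.nodup_cons.1 (p.cons_tail_support ▸ hp.support_nodup)).1

end Walk

lemma exists_isCycle_of_isPath_ne {B : Set V} {u v : V} {p q : G.Walk u v}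
    (hp : p.IsPath) (hq : q.IsPath) (hpq : p ≠ q)
    (hpB : ∀ x ∈ p.support, x ∈ B) (hqB : ∀ x ∈ q.support, x ∈ B) :
    ∃ (a : V) (c : G.Walk a a), c.IsCycle ∧ (∀ x ∈ c.support, x ∈ B) ∧
      c.length ≤ p.length + q.length := by
  obtain ⟨a, -, -, c, hc, hsub⟩ := hp.exists_isCycle_sublist_of_ne hq hpq
  refine ⟨a, c, hc, fun x hx ↦ ?_, ?_⟩
  · have := hsub.subset hx
    simp only [List.mem_append] at this
    exact this.elim (hpB x) fun h ↦ hqB x (by simpa using List.mem_of_mem_tail h)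
  · have := hsub.length_le
    simp only [List.length_append, List.length_reverse, List.length_tail,
      Walk.length_support] at this
    omega

structure IsMinCycleIn (B : Set V) {a : V} (C : G.Walk a a) : Prop where
  isCycle : C.IsCycle
  support_subset : ∀ x ∈ C.support, x ∈ B
  length_le : ∀ ⦃b : V⦄ (Z : G.Walk b b), Z.IsCycle → (∀ x ∈ Z.support, x ∈ B) →
    C.length ≤ Z.length

namespace IsMinCycleIn

variable {B : Set V} {a : V} {C : G.Walk a a}

lemma exists_of_isCycle {b : V} {Z : G.Walk b b} (hZ : Z.IsCycle)
    (hZB : ∀ x ∈ Z.support, x ∈ B) : ∃ (a : V) (C : G.Walk a a), G.IsMinCycleIn B C := by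
  classical
  have hex : ∃ n, ∃ (a : V) (C : G.Walk a a), C.IsCycle ∧ (∀ x ∈ C.support, x ∈ B) ∧
      C.length = n := ⟨_, b, Z, hZ, hZB, rfl⟩
  obtain ⟨a, C, hC, hCB, hlen⟩ := Nat.find_spec hex
  exact ⟨a, C, hC, hCB, fun b' Z' hZ' hZ'B ↦ hlen ▸ Nat.find_min' hex ⟨b', Z', hZ', hZ'B, rfl⟩⟩

lemma length_le_add (hC : G.IsMinCycleIn B C) {u v : V} {p q : G.Walk u v}
    (hp : p.IsPath) (hq : q.IsPath) (hpq : p ≠ q)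
    (hpB : ∀ x ∈ p.support, x ∈ B) (hqB : ∀ x ∈ q.support, x ∈ B) :
    C.length ≤ p.length + q.length := by
  obtain ⟨b, Z, hZ, hZB, hlen⟩ := exists_isCycle_of_isPath_ne hp hq hpq hpB hqB
  exact (hC.length_le Z hZ hZB).trans hlen

lemma rotate [DecidableEq V] (hC : G.IsMinCycleIn B C) {u : V} (hu : u ∈ C.support) :
    G.IsMinCycleIn B (C.rotate u hu) :=
  ⟨hC.isCycle.rotate hu, fun x hx ↦ hC.support_subset x (by simpa using hx),
    fun _ Z hZ hZB ↦ (C.length_rotate u hu).trans_le (hC.length_le Z hZ hZB)⟩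

lemma eq_snd_or_eq_penultimate (hC : G.IsMinCycleIn B C) {b : V} (hb : b ∈ C.support)
    (hab : G.Adj a b) : b = C.snd ∨ b = C.penultimate := by
  classical
  obtain ⟨q₁, q₂, hq₁, hq₂, hlen, hq₁C, hq₂C, hb'⟩ := hC.isCycle.exists_arcs hb hab.ne'
  have hrB : ∀ x ∈ hab.toWalk.support, x ∈ B := by
    simpa using ⟨hC.support_subset a C.start_mem_support, hC.support_subset b hb⟩
  have hbound : ∀ q : G.Walk a b, q.IsPath → (∀ x ∈ q.support, x ∈ C.support) →
      q.length ≠ 1 → C.length ≤ q.length + 1 := fun q hq hqC hq1 ↦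
    hC.length_le_add hq hab.isPath_toWalk (by rintro rfl; simp at hq1)
      (fun x hx ↦ hC.support_subset x (hqC x hx)) hrB
  have := hC.isCycle.three_le_length
  by_cases h₁ : q₁.length = 1
  · exact .inl (h₁ ▸ hb').symm
  by_cases h₂ : q₂.length = 1
  · exact .inr (by rw [Walk.penultimate, ← hb']; congr 1; omega)
  have := hbound q₁ hq₁ hq₁C h₁
  have := hbound q₂ hq₂ hq₂C h₂
  omega

lemma length_le_four_of_adj (hC : G.IsMinCycleIn B C) {v a₁ a₂ : V} (hv : v ∈ B)
    (hvC : v ∉ C.support) (h₁ : G.Adj v a₁) (h₂ : G.Adj v a₂) (h₁₂ : a₁ ≠ a₂)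
    (ha₁ : a₁ ∈ C.support) (ha₂ : a₂ ∈ C.support) : C.length ≤ 4 := by
  classical
  have hC' := hC.rotate ha₁
  obtain ⟨q₁, q₂, hq₁, hq₂, hlen, hq₁C, hq₂C, -⟩ :=
    hC'.isCycle.exists_arcs (by simpa using ha₂) h₁₂.symm
  set r : G.Walk a₁ a₂ := .cons h₁.symm h₂.toWalk
  have hr : r.IsPath := by simp [r, h₁₂, h₁.ne', h₂.ne]
  have hrB : ∀ x ∈ r.support, x ∈ B := by
    simpa [r] using ⟨hC.support_subset _ ha₁, hv, hC.support_subset _ ha₂⟩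
  have hbound : ∀ q : G.Walk a₁ a₂, q.IsPath → (∀ x ∈ q.support, x ∈ C.support) →
      C.length ≤ q.length + 2 := fun q hq hqC ↦ by
    refine (C.length_rotate a₁ ha₁).symm.trans_le (hC'.length_le_add hq hr ?_
      (fun x hx ↦ hC.support_subset x (hqC x hx)) hrB)
    rintro rfl
    exact hvC (hqC v (by simp [r]))
  have := hbound q₁ hq₁ (fun x hx ↦ by simpa using hq₁C x hx)
  have := hbound q₂ hq₂ (fun x hx ↦ by simpa using hq₂C x hx)
  rw [C.length_rotate] at hlen
  omega

lemma card_adj_le_four [DecidableEq V] [DecidableRel G.Adj] (hC : G.IsMinCycleIn B C)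
    {v : V} (hv : v ∈ B) : #{w ∈ C.support.toFinset | G.Adj v w} ≤ 4 := by
  by_cases hvC : v ∈ C.support
  · calc #{w ∈ C.support.toFinset | G.Adj v w}
        ≤ #{(C.rotate v hvC).snd, (C.rotate v hvC).penultimate} := by
          refine card_le_card fun w hw ↦ ?_
          simp only [mem_filter, List.mem_toFinset] at hw
          simpa using (hC.rotate hvC).eq_snd_or_eq_penultimate (by simpa using hw.1) hw.2
      _ ≤ 4 := card_le_two.trans (by norm_num)
  by_cases hlen : C.length ≤ 4
  · exact (card_filter_le _ _).trans
      ((C.card_support_toFinset_le_length_s9 hC.isCycle.not_nil).trans hlen)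
  refine (card_le_one.2 fun a₁ ha₁ a₂ ha₂ ↦ ?_).trans (by norm_num)
  simp only [mem_filter, List.mem_toFinset] at ha₁ ha₂
  by_contra h₁₂
  exact hlen (hC.length_le_four_of_adj hv hvC ha₁.2 ha₂.2 h₁₂ ha₁.1 ha₂.1)

end IsMinCycleIn

def degreeIn (G : SimpleGraph V) [DecidableRel G.Adj] (B : Finset V) (v : V) : ℕ :=
  #{w ∈ B | G.Adj v w}

section DegreeIn

variable [DecidableRel G.Adj]

lemma sum_degreeIn_univ [Fintype V] : ∑ v, G.degreeIn univ v = 2 * Nat.card G.edgeSet := by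
  simp_rw [degreeIn, ← neighborFinset_eq_filter, card_neighborFinset_eq_degree,
    sum_degrees_eq_twice_card_edges, edgeFinset_card, Nat.card_eq_fintype_card]

lemma degreeIn_eq_degreeIn_erase_add [DecidableEq V] {B : Finset V} {v : V} (hv : v ∈ B)
    (w : V) : G.degreeIn B w = G.degreeIn (B.erase v) w + if G.Adj w v then 1 else 0 := by
  conv_lhs => rw [degreeIn, ← insert_erase hv, filter_insert]
  split_ifs
  · exact card_insert_of_notMem (by simp)
  · rfl

lemma sum_degreeIn_eq_sum_degreeIn_erase_add [DecidableEq V] {B : Finset V} {v : V}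
    (hv : v ∈ B) :
    ∑ w ∈ B, G.degreeIn B w = ∑ w ∈ B.erase v, G.degreeIn (B.erase v) w + 2 * G.degreeIn B v := by
  have hback : #{w ∈ B.erase v | G.Adj w v} = G.degreeIn B v := by
    rw [degreeIn, filter_erase, erase_eq_of_notMem (by simp)]
    simp only [G.adj_comm _ v]
  rw [← add_sum_erase B _ hv, sum_congr rfl fun w _ ↦ degreeIn_eq_degreeIn_erase_add hv w,
    sum_add_distrib, sum_boole, Nat.cast_id, hback]
  ring

theorem exists_nonempty_forall_lt_degreeIn (t : ℕ) {B : Finset V}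
    (h : 2 * t * #B < ∑ v ∈ B, G.degreeIn B v) :
    ∃ B' ⊆ B, B'.Nonempty ∧ ∀ v ∈ B', t < G.degreeIn B' v := by
  classical
  induction B using Finset.strongInduction with | H B ih =>
  by_cases hall : ∀ v ∈ B, t < G.degreeIn B v
  · refine ⟨B, subset_rfl, nonempty_iff_ne_empty.2 ?_, hall⟩
    rintro rfl
    simp at h
  push Not at hall
  obtain ⟨v, hv, hvt⟩ := hall
  obtain ⟨B', hB', hne, hdeg⟩ := ih _ (erase_ssubset hv) <| by
    rw [sum_degreeIn_eq_sum_degreeIn_erase_add hv, ← card_erase_add_one hv] at h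
    nlinarith
  exact ⟨B', hB'.trans (erase_subset v B), hne, hdeg⟩

lemma exists_isCycle_of_two_le_degreeIn {B : Finset V} (hB : B.Nonempty)
    (h : ∀ v ∈ B, 2 ≤ G.degreeIn B v) :
    ∃ (a : V) (C : G.Walk a a), C.IsCycle ∧ ∀ x ∈ C.support, x ∈ B := by
  classical
  let S : Set ℕ := {n | ∃ (x y : V) (w : G.Walk x y), w.IsPath ∧ (∀ z ∈ w.support, z ∈ B) ∧
    w.length = n}
  have hS : S.Finite := (Set.finite_lt_nat #B).subset fun _ ⟨x, y, w, hw, hwB, hn⟩ ↦ by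
    have := card_le_card (s := w.support.toFinset) fun z hz ↦ hwB z (List.mem_toFinset.1 hz)
    rw [List.toFinset_card_of_nodup hw.support_nodup, Walk.length_support] at this
    exact Set.mem_ofPred.2 (by omega)
  obtain ⟨-, ⟨x, y, w, hw, hwB, rfl⟩, hmax⟩ :=
    S.exists_max_image id hS ⟨0, hB.choose, _, .nil, .nil, by simpa using hB.choose_spec, rfl⟩
  have hnbr : ∀ u ∈ B, G.Adj x u → u ∈ w.support := fun u hu hxu ↦ by
    by_contra hnot
    have := hmax _ ⟨u, y, .cons hxu.symm w, hw.cons hnot, by simpa using ⟨hu, hwB⟩, rfl⟩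
    simp at this
  obtain ⟨u₁, hu₁, u₂, hu₂, hne⟩ := one_lt_card.1 (h x (hwB x w.start_mem_support))
  obtain ⟨u, hu, hxu, hsnd⟩ : ∃ u ∈ B, G.Adj x u ∧ u ≠ w.snd := by
    simp only [mem_filter] at hu₁ hu₂
    by_cases h₁ : u₁ = w.snd
    · exact ⟨u₂, hu₂.1, hu₂.2, h₁ ▸ hne.symm⟩
    · exact ⟨u₁, hu₁.1, hu₁.2, h₁⟩
  have huw := hnbr u hu hxu
  obtain ⟨a, C, hC, hCB, -⟩ := exists_isCycle_of_isPath_ne (B := (B : Set V))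
    (hw.takeUntil huw) hxu.isPath_toWalk
    (fun heq ↦ hsnd (by simpa [heq] using (w.getVert_length_takeUntil huw).symm))
    (fun z hz ↦ hwB z (w.support_takeUntil_subset_support huw hz))
    (by simpa using ⟨hwB x w.start_mem_support, hu⟩)
  exact ⟨a, C, hC, hCB⟩

lemma degreeIn_le_degreeIn_sdiff_add [DecidableEq V] (B S : Finset V) (v : V) :
    G.degreeIn B v ≤ G.degreeIn (B \ S) v + #{w ∈ S | G.Adj v w} := by
  refine (card_le_card fun w hw ↦ ?_).trans (card_union_le _ _)
  simp only [mem_filter, mem_union, mem_sdiff] at hw ⊢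
  tauto

theorem exists_disjoint_isCycles (k : ℕ) {B : Finset V} (hB : B.Nonempty)
    (h : ∀ v ∈ B, 4 * k < G.degreeIn B v) :
    ∃ c : Fin k → Σ a, G.Walk a a, (∀ i, (c i).2.IsCycle) ∧
      (∀ i, ∀ x ∈ (c i).2.support, x ∈ B) ∧
      Pairwise fun i j ↦ (c i).2.support.Disjoint (c j).2.support := by
  classical
  induction k generalizing B with
  | zero => exact ⟨Fin.elim0, fun i ↦ i.elim0, fun i ↦ i.elim0, fun i ↦ i.elim0⟩
  | succ k ih =>
  obtain ⟨a, C, hC⟩ : ∃ (a : V) (C : G.Walk a a), G.IsMinCycleIn B C := by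
    obtain ⟨b, Z, hZ, hZB⟩ := exists_isCycle_of_two_le_degreeIn (G := G) hB fun v hv ↦ by
      have := h v hv; omega
    exact IsMinCycleIn.exists_of_isCycle (B := (B : Set V)) hZ hZB
  set B' := B \ C.support.toFinset
  have hdeg : ∀ v ∈ B, G.degreeIn B v ≤ G.degreeIn B' v + 4 := fun v hv ↦
    (degreeIn_le_degreeIn_sdiff_add B _ v).trans (by grw [hC.card_adj_le_four hv])
  have hB' : B'.Nonempty := by
    have ha := hC.support_subset a C.start_mem_support
    have : 0 < G.degreeIn B' a := by have := h a ha; have := hdeg a ha; omega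
    exact (card_pos.1 this).mono (filter_subset _ _)
  obtain ⟨c, hcyc, hcB, hdisj⟩ := ih hB' fun v hv ↦ by
    have := h v (mem_sdiff.1 hv).1; have := hdeg v (mem_sdiff.1 hv).1; omega
  have hCc : ∀ i, C.support.Disjoint (c i).2.support := fun i x hxC hxc ↦
    (mem_sdiff.1 (hcB i x hxc)).2 (List.mem_toFinset.2 hxC)
  refine ⟨Fin.cons ⟨a, C⟩ c, fun i ↦ ?_, fun i ↦ ?_,
    Pairwise.fin_cons (r := fun c c' : Σ a, G.Walk a a ↦ c.2.support.Disjoint c'.2.support)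
      (fun _ _ h ↦ h.symm) hCc hdisj⟩ <;> cases i using Fin.cases
  · exact hC.isCycle
  · exact hcyc _
  · exact hC.support_subset
  · exact fun x hx ↦ (mem_sdiff.1 (hcB _ x hx)).1

end DegreeIn

namespace Walk

variable {W : Type*} {H : SimpleGraph W} {f : V → W}
  (p : ∀ u v, G.Adj u v → H.Walk (f u) (f v))

def subdivide : ∀ {a b : V}, G.Walk a b → H.Walk (f a) (f b)
  | _, _, nil => nil
  | _, _, cons h q => (p _ _ h).append (subdivide q)

@[simp]
lemma subdivide_cons {a b c : V} (h : G.Adj a b) (q : G.Walk b c) :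
    (cons h q).subdivide p = (p a b h).append (q.subdivide p) := rfl

lemma exists_mem_darts_of_mem_support_tail_subdivide {a b : V} {w : G.Walk a b} {x : W}
    (hx : x ∈ (w.subdivide p).support.tail) :
    ∃ d ∈ w.darts, x ∈ (p d.fst d.snd d.adj).support := by
  induction w with
  | nil => simp [subdivide] at hx
  | cons h q ih =>
    rw [subdivide_cons, tail_support_append, List.mem_append] at hx
    rcases hx with hx | hx
    · exact ⟨⟨(_, _), h⟩, by simp, List.mem_of_mem_tail hx⟩
    · obtain ⟨d, hd, hxd⟩ := ih hx
      exact ⟨d, by simp [hd], hxd⟩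

lemma exists_mem_darts_of_mem_support_subdivide {a b : V} {w : G.Walk a b} (hw : ¬ w.Nil)
    {x : W} (hx : x ∈ (w.subdivide p).support) :
    ∃ d ∈ w.darts, x ∈ (p d.fst d.snd d.adj).support := by
  cases w with
  | nil => simp at hw
  | cons h q =>
    rw [subdivide_cons, mem_support_append_iff] at hx
    rcases hx with hx | hx
    · exact ⟨⟨(_, _), h⟩, by simp, hx⟩
    rw [← cons_tail_support, List.mem_cons] at hx
    rcases hx with rfl | hx
    · exact ⟨⟨(_, _), h⟩, by simp, end_mem_support _⟩
    · obtain ⟨d, hd, hxd⟩ := exists_mem_darts_of_mem_support_tail_subdivide p hx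
      exact ⟨d, by simp [hd], hxd⟩

end Walk

end SimpleGraph

namespace IsStrictSubdivision

variable {V W : Type} {G : SimpleGraph V} {H : SimpleGraph W} {f : V → W}
  {p : ∀ u v, G.Adj u v → H.Walk (f u) (f v)}

open SimpleGraph.Walk

lemma isPath (hs : IsStrictSubdivision G H f p) {u v : V} (h : G.Adj u v) : (p u v h).IsPath :=
  (hs.2.1 u v h).1

lemma two_le_length (hs : IsStrictSubdivision G H f p) {u v : V} (h : G.Adj u v) :
    2 ≤ (p u v h).length :=
  (hs.2.1 u v h).2

lemma exists_mem_edges_of_adj (hs : IsStrictSubdivision G H f p) {x y : W} (hxy : H.Adj x y) :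
    ∃ u v, ∃ h : G.Adj u v, s(x, y) ∈ (p u v h).edges :=
  hs.2.2.2.2.2.2 x y hxy

lemma exists_shared_end_of_mem_support (hs : IsStrictSubdivision G H f p) {u₁ v₁ u₂ v₂ : V}
    (h₁ : G.Adj u₁ v₁) (h₂ : G.Adj u₂ v₂) (hne : s(u₁, v₁) ≠ s(u₂, v₂)) {x : W}
    (hx₁ : x ∈ (p u₁ v₁ h₁).support) (hx₂ : x ∈ (p u₂ v₂ h₂).support) :
    ∃ z, x = f z ∧ (z = u₁ ∨ z = v₁) ∧ (z = u₂ ∨ z = v₂) := by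
  obtain ⟨hinj, -, -, hint, hdis, -, -⟩ := hs
  have hend : ∀ {u v} (h : G.Adj u v), x ∈ (p u v h).support → x ∈ Set.range f →
      x = f u ∨ x = f v := fun h hx hr ↦ by
    by_contra! hnot
    exact hint _ _ h x hx hnot.1 hnot.2 hr
  by_cases hr : x ∈ Set.range f
  · obtain ⟨z, rfl⟩ := hr
    simp only [hinj.eq_iff] at hend
    exact ⟨z, rfl, hend h₁ hx₁ ⟨z, rfl⟩, hend h₂ hx₂ ⟨z, rfl⟩⟩
  · have hne_f : ∀ z, x ≠ f z := fun z h ↦ hr ⟨z, h.symm⟩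
    exact absurd rfl (hdis _ _ h₁ _ _ h₂ hne x hx₁ (hne_f _) (hne_f _) x hx₂ (hne_f _) (hne_f _))

lemma eq_of_mem_support_tail_subdivide (hs : IsStrictSubdivision G H f p) {a b c : V}
    {w : G.Walk c b} (hw : (w.subdivide p).IsPath) (h : G.Adj a c) (hac : s(a, c) ∉ w.edges)
    {x : W} (hx : x ∈ (p a c h).support) (hx' : x ∈ (w.subdivide p).support.tail) :
    x = f a ∧ a ∈ w.support := by
  obtain ⟨d, hd, hxd⟩ := exists_mem_darts_of_mem_support_tail_subdivide p hx'
  have hne : s(a, c) ≠ s(d.fst, d.snd) := fun he ↦ hac (he ▸ List.mem_map_of_mem hd)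
  obtain ⟨z, rfl, hz₁, hz₂⟩ := hs.exists_shared_end_of_mem_support h d.adj hne hx hxd
  have hzw : z ∈ w.support := by
    rcases hz₂ with rfl | rfl
    exacts [w.dart_fst_mem_support_of_mem_darts hd, w.dart_snd_mem_support_of_mem_darts hd]
  rcases hz₁ with rfl | rfl
  · exact ⟨rfl, hzw⟩
  · exact absurd hx' hw.start_notMem_support_tail

lemma isPath_subdivide (hs : IsStrictSubdivision G H f p) {a b : V} {w : G.Walk a b}
    (hw : w.IsPath) : (w.subdivide p).IsPath := by
  induction w with
  | nil => exact .nil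
  | cons h q ih =>
    obtain ⟨hq, haq⟩ := (cons_isPath_iff h q).1 hw
    have hq' := ih hq
    exact (hs.isPath h).append hq' fun x hx hx' ↦ haq
      (hs.eq_of_mem_support_tail_subdivide hq' h
        (fun he ↦ haq (q.fst_mem_support_of_mem_edges he)) hx hx').2

lemma isCycle_subdivide (hs : IsStrictSubdivision G H f p) {a : V} {C : G.Walk a a}
    (hC : C.IsCycle) : (C.subdivide p).IsCycle := by
  cases C with
  | nil => simp at hC
  | cons h q =>
    obtain ⟨hq, hac⟩ := (cons_isCycle_iff q h).1 hC
    have hq' := hs.isPath_subdivide hq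
    refine (hs.isPath h).isCycle_append hq' (fun x hx hx' ↦ ?_) (.inl (hs.two_le_length h))
    obtain ⟨rfl, -⟩ := hs.eq_of_mem_support_tail_subdivide hq' h hac (List.mem_of_mem_tail hx) hx'
    exact (hs.isPath h).start_notMem_support_tail hx

lemma mem_support_of_mem_support_subdivide (hs : IsStrictSubdivision G H f p) {a b : V}
    {w : G.Walk a b} (hw : ¬ w.Nil) {x : W} (hx : x ∈ (w.subdivide p).support) {u v : V}
    (h : G.Adj u v) (hxuv : x ∈ (p u v h).support) :
    (u ∈ w.support ∧ v ∈ w.support) ∨ (x = f u ∧ u ∈ w.support) ∨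
      (x = f v ∧ v ∈ w.support) := by
  obtain ⟨d, hd, hxd⟩ := exists_mem_darts_of_mem_support_subdivide p hw hx
  have hfst := w.dart_fst_mem_support_of_mem_darts hd
  have hsnd := w.dart_snd_mem_support_of_mem_darts hd
  by_cases he : s(u, v) = s(d.fst, d.snd)
  · rcases Sym2.eq_iff.1 he with ⟨rfl, rfl⟩ | ⟨rfl, rfl⟩
    exacts [.inl ⟨hfst, hsnd⟩, .inl ⟨hsnd, hfst⟩]
  obtain ⟨z, rfl, hz₁, hz₂⟩ := hs.exists_shared_end_of_mem_support h d.adj he hxuv hxd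
  have hz : z ∈ w.support := by rcases hz₂ with rfl | rfl <;> assumption
  rcases hz₁ with rfl | rfl
  exacts [.inr (.inl ⟨rfl, hz⟩), .inr (.inr ⟨rfl, hz⟩)]

lemma ne_and_not_adj_of_disjoint (hs : IsStrictSubdivision G H f p) {a₁ b₁ a₂ b₂ : V}
    {w₁ : G.Walk a₁ b₁} {w₂ : G.Walk a₂ b₂} (h₁ : ¬ w₁.Nil) (h₂ : ¬ w₂.Nil)
    (hdisj : w₁.support.Disjoint w₂.support) {x y : W} (hx : x ∈ (w₁.subdivide p).support)
    (hy : y ∈ (w₂.subdivide p).support) : x ≠ y ∧ ¬ H.Adj x y := by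
  constructor
  · rintro rfl
    obtain ⟨d, hd, hxd⟩ := exists_mem_darts_of_mem_support_subdivide p h₁ hx
    have hfst := w₁.dart_fst_mem_support_of_mem_darts hd
    have hsnd := w₁.dart_snd_mem_support_of_mem_darts hd
    rcases hs.mem_support_of_mem_support_subdivide h₂ hy d.adj hxd with
      ⟨hu, -⟩ | ⟨-, hu⟩ | ⟨-, hv⟩
    exacts [hdisj hfst hu, hdisj hfst hu, hdisj hsnd hv]
  · intro hadj
    obtain ⟨u, v, h, he⟩ := hs.exists_mem_edges_of_adj hadj
    have := hs.two_le_length h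
    rcases hs.mem_support_of_mem_support_subdivide h₁ hx h (fst_mem_support_of_mem_edges _ he)
      with ⟨hu₁, hv₁⟩ | ⟨rfl, hu₁⟩ | ⟨rfl, hv₁⟩ <;>
    rcases hs.mem_support_of_mem_support_subdivide h₂ hy h (snd_mem_support_of_mem_edges _ he)
      with ⟨hu₂, hv₂⟩ | ⟨rfl, hu₂⟩ | ⟨rfl, hv₂⟩
    all_goals first | exact hdisj hu₁ hu₂ | exact hdisj hv₁ hv₂ | skip
    -- the remaining cases say that `p u v h` has the edge `s(f u, f v)`, so it has length one
    · have := (hs.isPath h).length_eq_one_of_mem_edges he; omega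
    · have := (hs.isPath h).length_eq_one_of_mem_edges (Sym2.eq_swap ▸ he); omega

end IsStrictSubdivision

/-- There is a constant `c > 0` such that for every `k ≥ 2`: if `G`
has at least one vertex and average degree at least `c * k * log k`, then every strict
subdivision of `G` contains `k` pairwise independent cycles. -/
theorem stmt9 :
    ∃ c : ℝ, 0 < c ∧
      ∀ (k : ℕ), 2 ≤ k →
        ∀ (V W : Type) [Fintype V] [Fintype W] [Nonempty V]
          (G : SimpleGraph V) (H : SimpleGraph W)
          (f : V → W) (p : ∀ u v, G.Adj u v → H.Walk (f u) (f v)),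
          IsStrictSubdivision G H f p →
          c * k * Real.log k * (Fintype.card V : ℝ) ≤ 2 * (Nat.card G.edgeSet : ℝ) →
          HasIndepCycles H k := by
  refine ⟨12, by norm_num, fun k hk V W _ _ _ G H f p hs havg ↦ ?_⟩
  classical
  have hdense : 2 * (4 * k) * #(univ : Finset V) < ∑ v, G.degreeIn univ v := by
    have hlog : 2 / 3 < Real.log k := calc
      (2 / 3 : ℝ) < Real.log 2 := by linarith [Real.log_two_gt_d9]
      _ ≤ Real.log k := Real.log_le_log (by norm_num) (by exact_mod_cast hk)
    have hkn : (0 : ℝ) < k * Fintype.card V := by positivity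
    rw [sum_degreeIn_univ, card_univ]
    exact_mod_cast (by nlinarith : 2 * (4 * k) * (Fintype.card V : ℝ) < 2 * Nat.card G.edgeSet)
  obtain ⟨B, -, hB, hdeg⟩ := exists_nonempty_forall_lt_degreeIn _ hdense
  obtain ⟨c, hcyc, -, hdisj⟩ := exists_disjoint_isCycles k hB hdeg
  exact ⟨fun i ↦ f (c i).1, fun i ↦ (c i).2.subdivide p, fun i ↦ hs.isCycle_subdivide (hcyc i),
    fun i j hij x hx y hy ↦ hs.ne_and_not_adj_of_disjoint (hcyc i).not_nil (hcyc j).not_nil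
      (hdisj hij) hx hy⟩
end

section
/- Let k ≥ 1 and let G be an O_k-free graph in which every vertex has degree at least 2. Then for every vertex v of G of degree d, deleting v decreases the cycle rank by at least (d − k + 1)/2, i.e., 2·(r(G) − r(G − v)) ≥ d − k + 1. -/
open SimpleGraph

/-!
Deleting `v` removes `d` edges and one vertex, while the `m` components of `G - v` that meet
`N(v)` merge with `v` into a single component of `G`; hence `r(G) - r(G - v) ≥ d - m`.
A component of `G - v` containing exactly one neighbour of `v` has all degrees at least `2`
except at that neighbour, so it is not a tree and carries a cycle. Cycles in distinct
components of `G - v` are independent in `G`, so there are `a < k` such components. Each of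
the other `m - a` components meeting `N(v)` contains at least two neighbours of `v`, so
`d ≥ 2m - a`, and `2(d - m) ≥ d - a ≥ d - k + 1`.
-/

open Finset

lemma Finset.two_mul_card_image_le_card_add {α β : Type*} [DecidableEq β] (f : α → β)
    (s : Finset α) : 2 * #(s.image f) ≤ #s + #{c ∈ s.image f | #{a ∈ s | f a = c} = 1} := by
  rw [card_eq_sum_card_image f s, card_filter, mul_comm, ← smul_eq_mul, ← sum_const,
    ← sum_add_distrib]
  refine sum_le_sum fun c hc => ?_
  obtain ⟨a, ha, rfl⟩ := mem_image.mp hc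
  have : 1 ≤ #{a' ∈ s | f a' = f a} := card_pos.mpr ⟨a, mem_filter.mpr ⟨ha, rfl⟩⟩
  split_ifs <;> omega

namespace SimpleGraph

variable {V : Type} {G : SimpleGraph V}

lemma degN_eq_ncard (G : SimpleGraph V) (u : V) : degN G u = (G.neighborSet u).ncard :=
  Nat.card_coe_set_eq _

lemma degN_eq_degree (G : SimpleGraph V) (u : V) [Fintype (G.neighborSet u)] :
    degN G u = G.degree u := by
  rw [degN, Nat.card_eq_fintype_card, card_neighborSet_eq_degree]

lemma degN_induce (s : Set V) (u : s) :
    degN (G.induce s) u = (G.neighborSet u ∩ s).ncard := by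
  rw [degN_eq_ncard, ← Set.ncard_image_of_injective _ Subtype.val_injective]
  congr 1
  ext x
  simp [and_comm]

lemma degN_le_degN_induce_ne_add_one {v : V} (u : {w | w ≠ v}) :
    degN G u ≤ degN (G.induce {w | w ≠ v}) u + 1 := by
  rw [degN_induce, degN_eq_ncard]
  simpa [Set.sdiff_eq, Set.compl_singleton_eq] using
    Set.ncard_le_ncard_sdiff_add_ncard (G.neighborSet u) {v}

lemma degN_induce_ne_of_not_adj {v : V} (u : {w | w ≠ v}) (huv : ¬ G.Adj u v) :
    degN (G.induce {w | w ≠ v}) u = degN G u := by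
  rw [degN_induce, degN_eq_ncard, Set.inter_eq_left.mpr]
  exact fun w hw hwv => huv (hwv ▸ hw)

lemma ConnectedComponent.degN_toSimpleGraph (C : G.ConnectedComponent) (u : C) :
    degN C.toSimpleGraph u = degN G u := by
  rw [ConnectedComponent.toSimpleGraph, degN_induce, degN_eq_ncard, Set.inter_eq_left.mpr]
  exact fun w hw => C.mem_supp_of_adj_mem_supp u.2 hw

lemma Connected.not_isAcyclic_of_two_le_degN [Finite V] (hG : G.Connected) (x : V)
    (hx : 1 ≤ degN G x) (h : ∀ u ≠ x, 2 ≤ degN G u) : ¬ G.IsAcyclic := by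
  classical
  have := Fintype.ofFinite V
  intro hacyc
  obtain ⟨y, hy⟩ : (G.neighborSet x).Nonempty := by
    rw [← Set.ncard_pos, ← degN_eq_ncard]; exact hx
  have : Nontrivial V := ⟨x, y, G.ne_of_adj hy⟩
  obtain ⟨a, b, hab, ha, hb⟩ := (IsTree.mk hG hacyc).exists_ne_and_degree_eq_one
  rw [← degN_eq_degree] at ha hb
  obtain hax | hax := eq_or_ne a x
  · have := h b (hax ▸ hab.symm); omega
  · have := h a hax; omega

lemma Walk.exists_adj_reachable_induce_ne {u v : V} (p : G.Walk u v) (hu : u ≠ v) :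
    ∃ x : {w | w ≠ v}, G.Adj v x ∧ (G.induce {w | w ≠ v}).Reachable ⟨u, hu⟩ x := by
  induction p with
  | nil => exact absurd rfl hu
  | @cons u b w h q ih =>
    by_cases hb : b = w
    · subst hb
      exact ⟨⟨u, hu⟩, h.symm, .refl _⟩
    · obtain ⟨x, hx, hr⟩ := ih hb
      exact ⟨x, hx, (show (G.induce _).Adj ⟨u, hu⟩ ⟨b, hb⟩ from h).reachable.trans hr⟩

lemma card_connectedComponent_induce_ne_add_one_le [Finite V] (v : V)
    (M : Finset (G.induce {u | u ≠ v}).ConnectedComponent)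
    (hM : ∀ u : {u | u ≠ v}, G.Adj v u → (G.induce {u | u ≠ v}).connectedComponentMk u ∈ M) :
    Nat.card (G.induce {u | u ≠ v}).ConnectedComponent + 1 ≤
      Nat.card G.ConnectedComponent + #M := by
  classical
  have mem_of_reachable (u : {u | u ≠ v}) (h : G.Reachable u v) :
      (G.induce {u | u ≠ v}).connectedComponentMk u ∈ M := by
    obtain ⟨x, hx, hux⟩ := h.some.exists_adj_reachable_induce_ne u.2
    exact ConnectedComponent.sound hux ▸ hM x hx
  let f := ConnectedComponent.map (Embedding.induce (G := G) {u | u ≠ v}).toHom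
  have hmaps : Set.MapsTo f (↑M)ᶜ {G.connectedComponentMk v}ᶜ := by
    intro C hC hfC
    induction C using ConnectedComponent.ind with | h u => ?_
    exact hC (mem_of_reachable u (ConnectedComponent.exact hfC))
  have hinj : Set.InjOn f (↑M)ᶜ := by
    intro C₁ hC₁ C₂ _ h
    induction C₁ using ConnectedComponent.ind with | h u₁ => ?_
    induction C₂ using ConnectedComponent.ind with | h u₂ => ?_
    obtain ⟨p⟩ : G.Reachable u₁ u₂ := ConnectedComponent.exact h
    by_cases hv : v ∈ p.support
    · exact absurd (mem_of_reachable u₁ ⟨p.takeUntil v hv⟩) hC₁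
    · exact ConnectedComponent.sound
        (p.induce {u | u ≠ v} fun x hx hxv => hv (hxv ▸ hx)).reachable
  have hle := Set.ncard_le_ncard_of_injOn f hmaps hinj
  have hM := Set.ncard_add_ncard_compl (M : Set (G.induce {u | u ≠ v}).ConnectedComponent)
  have hv := Set.ncard_add_ncard_compl {G.connectedComponentMk v}
  rw [Set.ncard_coe_finset] at hM
  rw [Set.ncard_singleton] at hv
  omega

lemma card_edgeSet_eq_card_edgeSet_induce_ne_add_degN [Finite V] (G : SimpleGraph V) (v : V) :
    Nat.card G.edgeSet = Nat.card (G.induce {u | u ≠ v}).edgeSet + degN G v := by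
  classical
  have := Fintype.ofFinite V
  have hle : G.degree v ≤ #G.edgeFinset := by
    rw [← card_incidenceFinset_eq_degree]
    exact card_le_card (G.incidenceFinset_subset v)
  rw [← Set.compl_singleton_eq, Nat.card_eq_fintype_card, Nat.card_eq_fintype_card,
    ← edgeFinset_card, ← edgeFinset_card, card_edgeFinset_induce_compl_singleton,
    card_edgeFinset_deleteIncidenceSet, degN_eq_degree]
  omega

lemma exists_isCycle_mem_of_existsUnique_adj [Finite V] (hmin : ∀ u, 2 ≤ degN G u) {v : V}
    (C : (G.induce {u | u ≠ v}).ConnectedComponent)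
    (hC : ∃! x : {u | u ≠ v}, G.Adj v x ∧ x ∈ C) :
    ∃ (b : {u | u ≠ v}) (w : (G.induce {u | u ≠ v}).Walk b b), w.IsCycle ∧ b ∈ C := by
  obtain ⟨x, ⟨-, hx⟩, huniq⟩ := hC
  have hx_deg : 1 ≤ degN C.toSimpleGraph ⟨x, hx⟩ := by
    rw [C.degN_toSimpleGraph]
    change 1 ≤ degN (G.induce {u | u ≠ v}) x
    have := degN_le_degN_induce_ne_add_one (G := G) x
    have := hmin x
    omega
  have hdeg (u : C) (hu : u ≠ ⟨x, hx⟩) : 2 ≤ degN C.toSimpleGraph u := by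
    rw [C.degN_toSimpleGraph, degN_induce_ne_of_not_adj]
    · exact hmin u
    · exact fun hadj => hu (Subtype.ext (huniq u ⟨hadj.symm, u.2⟩))
  obtain ⟨b, w, hw⟩ : ∃ (b : C) (w : C.toSimpleGraph.Walk b b), w.IsCycle := by
    by_contra! h
    exact C.connected_toSimpleGraph.not_isAcyclic_of_two_le_degN _ hx_deg hdeg h
  exact ⟨b, w.map C.toSimpleGraph_hom, hw.map Subtype.val_injective, b.2⟩

lemma hasIndepCycles_of_isCycle_induce {s : Set V} {k : ℕ} {b : Fin k → s}
    (w : ∀ i, (G.induce s).Walk (b i) (b i)) (hw : ∀ i, (w i).IsCycle)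
    (hb : Pairwise fun i j =>
      (G.induce s).connectedComponentMk (b i) ≠ (G.induce s).connectedComponentMk (b j)) :
    HasIndepCycles G k := by
  refine ⟨fun i => b i, fun i => (w i).map (Embedding.induce s).toHom,
    fun i => (hw i).map Subtype.val_injective, fun i j hij x hx y hy => ?_⟩
  classical
  obtain ⟨x', hx', rfl⟩ := List.mem_map.mp ((w i).support_map _ ▸ hx)
  obtain ⟨y', hy', rfl⟩ := List.mem_map.mp ((w j).support_map _ ▸ hy)
  have hbx := ((w i).takeUntil x' hx').reachable
  have hby := ((w j).takeUntil y' hy').reachable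
  refine ⟨fun hxy => hb hij ?_, fun hadj => hb hij ?_⟩
  · exact ConnectedComponent.sound (hbx.trans (Subtype.val_injective hxy ▸ hby.symm))
  · exact ConnectedComponent.sound
      (hbx.trans ((show (G.induce s).Adj x' y' from hadj).reachable.trans hby.symm))

lemma hasIndepCycles_of_le_card {s : Set V} (A : Finset (G.induce s).ConnectedComponent)
    (hA : ∀ C ∈ A, ∃ (b : s) (w : (G.induce s).Walk b b), w.IsCycle ∧ b ∈ C) {k : ℕ}
    (hk : k ≤ #A) : HasIndepCycles G k := by
  choose b w hw hbC using hA
  let e : Fin k ↪ A := (Fin.castLEEmb hk).trans A.equivFin.symm.toEmbedding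
  refine hasIndepCycles_of_isCycle_induce (fun i => w _ (e i).2) (fun i => hw _ _)
    fun i j hij h => hij (e.injective (Subtype.ext ?_))
  rwa [(ConnectedComponent.mem_supp_iff _ _).mp (hbC _ (e i).2),
    (ConnectedComponent.mem_supp_iff _ _).mp (hbC _ (e j).2)] at h

end SimpleGraph

theorem stmt11_general (k : ℕ) (V : Type) [Fintype V] (G : SimpleGraph V)
    (hfree : OkFree G k) (hmin : ∀ u : V, 2 ≤ degN G u) (v : V) (d : ℕ)
    (hd : degN G v = d) :
    (d : ℤ) - (k : ℤ) + 1 ≤ 2 * (cycleRank G - cycleRank (G.induce {u | u ≠ v})) := by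
  classical
  let mk := (G.induce {u | u ≠ v}).connectedComponentMk
  let N := (G.neighborFinset v).subtype (· ∈ {u | u ≠ v})
  let M := N.image mk
  let A := M.filter fun C => #{u ∈ N | mk u = C} = 1
  have hN : #N = d := by
    rw [card_subtype, filter_true_of_mem (p := (· ∈ {u | u ≠ v}))
      fun u hu => (G.ne_of_adj ((mem_neighborFinset ..).mp hu)).symm,
      card_neighborFinset_eq_degree, ← degN_eq_degree, hd]
  have hV : Nat.card V = Nat.card {u | u ≠ v} + 1 := by
    rw [Nat.card_coe_set_eq, ← Set.compl_singleton_eq, ← Set.ncard_add_ncard_compl {v},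
      Set.ncard_singleton, add_comm]
  have hE := card_edgeSet_eq_card_edgeSet_induce_ne_add_degN G v
  have hcomp : _ ≤ _ + #M := card_connectedComponent_induce_ne_add_one_le v M fun u hu =>
    mem_image_of_mem _ (mem_subtype.mpr ((mem_neighborFinset ..).mpr hu))
  have hM : 2 * #M ≤ #N + #A := two_mul_card_image_le_card_add mk N
  have hA : #A < k := by
    refine lt_of_not_ge fun hk => hfree (hasIndepCycles_of_le_card A (fun C hC => ?_) hk)
    have hone := card_eq_one_iff_existsUnique.mp (mem_filter.mp hC).2
    simp only [N, mem_filter, mem_subtype, mem_neighborFinset] at hone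
    exact exists_isCycle_mem_of_existsUnique_adj hmin C hone
  simp only [cycleRank]
  omega

/-- If `G` is `O_k`-free with minimum degree at least 2 and `v` has
degree `d`, then deleting `v` decreases the cycle rank by at least `(d - k + 1)/2`. -/
theorem stmt11 (k : ℕ) (hk : 1 ≤ k) (V : Type) [Fintype V] (G : SimpleGraph V)
    (hfree : OkFree G k) (hmin : ∀ u : V, 2 ≤ degN G u) (v : V) (d : ℕ)
    (hd : degN G v = d) :
    (d : ℤ) - (k : ℤ) + 1 ≤ 2 * (cycleRank G - cycleRank (G.induce {u | u ≠ v})) :=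
  stmt11_general k V G hfree hmin v d hd
end
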